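/- arXiv:1809.04010 — 6 statements merged into one kernel-verified Lean document; each statement's English description precedes it below -/
import Mathlib

section
/- Let p be an odd prime, d a positive integer, q = p^d, and let S be the SLCE almost difference set over 𝔽_q^*. Then every power of p is a strong multiplier of S: for every natural number i, the image {x^{p^i} : x ∈ S} equals S. -/
/-- Every power of `p` is a strong multiplier of the SLCE almost
difference set over `𝔽_{p^d}^*`: the image of `S` under `x ↦ x^(p^i)` equals `S`. -/
theorem slce_powers_of_p_strong_multipliers
    (p d : ℕ) (hp : p.Prime) (hodd : p ≠ 2) (hd : 0 < d)
    (F : Type) [Field F] [Fintype F] (hF : Fintype.card F = p ^ d)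
    (S : Set F) (hS : S = {x : F | x ≠ 0 ∧ ¬ IsSquare (x + 1)})
    (i : ℕ) :
    (fun x : F => x ^ (p ^ i)) '' S = S := by
  haveI : Fact p.Prime := ⟨hp⟩
  -- characteristic of F is p
  haveI hchar : CharP F p := by
    have hr := ringChar.charP F
    have hrp : (ringChar F).Prime := CharP.char_is_prime F _
    haveI : Fact (ringChar F).Prime := ⟨hrp⟩
    have hdvd : ringChar F ∣ Fintype.card F :=
      (prime_dvd_char_iff_dvd_card (ringChar F)).mp dvd_rfl
    rw [hF] at hdvd
    have : ringChar F = p := by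
      have := hrp.dvd_of_dvd_pow hdvd
      exact (Nat.prime_dvd_prime_iff_eq hrp hp).mp this
    rwa [this] at hr
  set e := iterateFrobeniusEquiv F p i with he
  have hfun : (fun x : F => x ^ (p ^ i)) = ⇑e := by
    funext x; rw [he, iterateFrobeniusEquiv_def]
  rw [hfun, hS]
  ext y
  constructor
  · rintro ⟨x, ⟨hx0, hxs⟩, rfl⟩
    refine ⟨by simpa using hx0, fun ⟨r, hr⟩ => hxs ⟨e.symm r, ?_⟩⟩
    apply e.injective
    simp only [map_add, map_one, map_mul, RingEquiv.apply_symm_apply]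
    exact hr
  · rintro ⟨hy0, hys⟩
    refine ⟨e.symm y, ⟨fun h => hy0 (by simpa using congrArg e h), fun ⟨r, hr⟩ => hys ⟨e r, ?_⟩⟩, by simp⟩
    · have := congrArg e hr
      simpa [map_add, map_mul] using this
end

section
/- Let q be an odd prime power, let S be the SLCE almost difference set over 𝔽_q^*, and let S^c = 𝔽_q^* \ S be its complement in 𝔽_q^*. Let χ be a multiplicative character of 𝔽_q with values in ℂ (with the convention χ(0) = 0), and set K(χ) = χ(4)·Σ_{x ∈ 𝔽_q} χ(x)·χ(1−x). Then Σ_{x ∈ S^c} χ(x) = (1/2)·χ(−1)·(K(χ) + 1). -/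
open scoped Classical

/-- For the SLCE almost difference set `S` over `𝔽_q^*` (q an odd
prime power) and a multiplicative character `χ` of `𝔽_q` into `ℂ`,
`χ(S^c) = (1/2)·χ(-1)·(K(χ) + 1)` where `K(χ) = χ(4)·Σ_x χ(x)χ(1-x)`. -/
theorem slce_character_value
    (F : Type) [Field F] [Fintype F] (hodd : Odd (Fintype.card F))
    (χ : MulChar F ℂ) :
    ∑ x ∈ Finset.univ.filter (fun x : F => x ≠ 0 ∧ IsSquare (x + 1)), χ x =
      (1 / 2) * χ (-1) * ((χ 4 * ∑ x : F, χ x * χ (1 - x)) + 1) := by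
  classical
  have hchar : ringChar F ≠ 2 := by
    intro h
    rw [FiniteField.even_card_iff_char_two] at h
    rw [Nat.odd_iff] at hodd
    omega
  have h2 : (2 : F) ≠ 0 := Ring.two_ne_zero hchar
  set J := ∑ x : F, χ x * χ (1 - x) with hJ
  -- Step A : drop the `x ≠ 0` condition
  have hA : ∑ x ∈ Finset.univ.filter (fun x : F => x ≠ 0 ∧ IsSquare (x + 1)), χ x
      = ∑ x ∈ Finset.univ.filter (fun x : F => IsSquare (x + 1)), χ x := by
    rw [Finset.sum_filter, Finset.sum_filter]
    refine Finset.sum_congr rfl fun x _ => ?_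
    by_cases hx : x = 0
    · simp [hx, MulChar.map_zero]
    · simp [hx]
  -- E1 : substitution x ↦ 2x - 1
  have hE1 : ∑ t : F, χ (t ^ 2 - 1) = χ (-1) * χ 4 * J := by
    rw [hJ, Finset.mul_sum]
    refine (Fintype.sum_bijective (fun x : F => 2 * x - 1) ?_ _ _ ?_).symm
    · rw [Finite.injective_iff_bijective.symm]
      intro a b hab
      simp only at hab
      have : (2 : F) * a = 2 * b := by linear_combination hab
      exact mul_left_cancel₀ h2 this
    · intro x
      have : (2 * x - 1) ^ 2 - 1 = (-1) * (4 * (x * (1 - x))) := by ring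
      rw [this, map_mul, map_mul, map_mul]
      ring
  -- E2 : fiber counting for t ↦ t² - 1
  have hE2 : ∑ t : F, χ (t ^ 2 - 1)
      = 2 * (∑ x ∈ Finset.univ.filter (fun x : F => IsSquare (x + 1)), χ x) - χ (-1) := by
    rw [Finset.sum_comp (fun b => χ b) (fun t : F => t ^ 2 - 1)]
    have himg : (Finset.univ.image (fun t : F => t ^ 2 - 1))
        = Finset.univ.filter (fun x : F => IsSquare (x + 1)) := by
      ext b
      simp only [Finset.mem_image, Finset.mem_filter, Finset.mem_univ, true_and]
      constructor
      · rintro ⟨t, rfl⟩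
        exact ⟨t, by ring⟩
      · rintro ⟨r, hr⟩
        exact ⟨r, by rw [sq]; linear_combination -hr⟩
    rw [himg]
    have hfib : ∀ b ∈ Finset.univ.filter (fun x : F => IsSquare (x + 1)),
        (Finset.filter (fun t : F => t ^ 2 - 1 = b) Finset.univ).card • χ b
          = 2 * χ b - (if b = -1 then χ b else 0) := by
      intro b hb
      rw [Finset.mem_filter] at hb
      obtain ⟨-, s, hs⟩ := hb
      by_cases hb1 : b = -1
      · have hcard : Finset.filter (fun t : F => t ^ 2 - 1 = b) Finset.univ = {0} := by
          ext t
          simp only [Finset.mem_filter, Finset.mem_univ, true_and, Finset.mem_singleton, hb1]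
          constructor
          · intro h
            have : t ^ 2 = 0 := by linear_combination h
            exact pow_eq_zero_iff (by norm_num) |>.mp this
          · rintro rfl; ring
        rw [hcard]
        simp [hb1]
        ring
      · have hs0 : s ≠ 0 := by
          rintro rfl
          apply hb1
          have : b + 1 = 0 := by rw [hs]; ring
          linear_combination this
        have hcard : Finset.filter (fun t : F => t ^ 2 - 1 = b) Finset.univ = {s, -s} := by
          ext t
          simp only [Finset.mem_filter, Finset.mem_univ, true_and, Finset.mem_insert,
            Finset.mem_singleton]
          constructor
          · intro h
            have h' : (t - s) * (t + s) = 0 := by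
              have : t ^ 2 = s * s := by linear_combination h + hs
              linear_combination this
            rcases mul_eq_zero.mp h' with h'' | h''
            · left; linear_combination h''
            · right; linear_combination h''
          · rintro (rfl | rfl) <;> (rw [sq]; linear_combination -hs)
        rw [hcard]
        have hne : s ≠ -s := by
          intro h
          apply hs0
          have : 2 * s = 0 := by linear_combination h
          exact (mul_eq_zero.mp this).resolve_left h2
        rw [Finset.card_insert_of_notMem (by simpa using hne), Finset.card_singleton]
        simp [hb1]
    rw [Finset.sum_congr rfl hfib, Finset.sum_sub_distrib, ← Finset.mul_sum]
    congr 1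
    rw [Finset.sum_ite_eq' _ (-1 : F) (fun b => χ b)]
    simp [show IsSquare ((-1 : F) + 1) from by simp]
  rw [hA]
  have key : 2 * (∑ x ∈ Finset.univ.filter (fun x : F => IsSquare (x + 1)), χ x) - χ (-1)
      = χ (-1) * χ 4 * J := by rw [← hE2, hE1]
  linear_combination key / 2
end

section
/- Let p be an odd prime, let S be the SLCE almost difference set over 𝔽_p^*, and let S₁ = {j ∈ (ℤ/(p-1)ℤ)^* : the least positive residue of j is less than (p−1)/2}. If t is a unit of ℤ/(p-1)ℤ with t ≠ 1 and t ≠ −1 that is a multiplier of S, then there exists a unit a ∈ S₁ with a ≠ 1 and a·S₁ = S₁. -/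
private lemma slce_nt (m t d : ℕ) (hm : Odd m) (htlt : t < 2*m) (htodd : Odd t)
    (hcop : Nat.Coprime t (2*m)) (hdm : d ∣ m) (hdpos : 0 < d)
    (H : ∀ r, 1 ≤ r → r < m → (d ∣ r ↔ (t*r) % (2*m) < m)) :
    t = 1 ∨ t = 2*m - 1 := by
  have hm1 : 1 ≤ m := hm.pos
  have htodd' := Nat.odd_iff.mp htodd
  have hmodd' := Nat.odd_iff.mp hm
  rcases eq_or_lt_of_le hm1 with h1 | hm2
  · left; omega
  by_cases hd1 : d = 1
  · subst hd1
    by_cases ht1 : t = 1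
    · left; exact ht1
    have ht3 : 3 ≤ t := by omega
    have hmlt : t < m := by
      have := (H 1 le_rfl (by omega)).mp (dvd_refl 1)
      rwa [mul_one, Nat.mod_eq_of_lt htlt] at this
    obtain ⟨Q, R, hQR, hR⟩ : ∃ Q R, m = t*Q + R ∧ R < t :=
      ⟨m/t, m%t, (Nat.div_add_mod m t).symm, Nat.mod_lt m (by omega)⟩
    have hQ3 : 3*Q ≤ t*Q := Nat.mul_le_mul_right Q ht3
    set k := Q + 1 with hk
    have e1 : t*k = t*Q + t := by rw [hk, Nat.mul_add, Nat.mul_one]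
    have hkm : k < m := by omega
    have h3 : t * k < 2 * m := by omega
    have := (H k (by omega) hkm).mp (one_dvd k)
    rw [Nat.mod_eq_of_lt h3] at this
    omega
  · -- d ≥ 2
    have hdodd : d % 2 = 1 := by
      rcases Nat.even_or_odd d with he | ho
      · exfalso; obtain ⟨c, hc⟩ := hdm; obtain ⟨e, he⟩ := he
        have : m = 2*(e*c) := by rw [hc, he]; ring
        omega
      · exact Nat.odd_iff.mp ho
    have hd3 : 3 ≤ d := by omega
    have hm3 : 3 ≤ m := le_trans hd3 (Nat.le_of_dvd (by omega) hdm)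
    have htm : m < t := by
      have h1 := H 1 le_rfl (by omega)
      rw [mul_one, Nat.mod_eq_of_lt htlt] at h1
      have h2 : ¬ t < m := fun h => by
        have hh := h1.mpr h
        have := Nat.le_of_dvd one_pos hh
        omega
      have htne : t ≠ m := by
        rintro rfl
        have hg : Nat.gcd t (2*t) = t := Nat.gcd_eq_left ⟨2, by ring⟩
        have := hcop
        rw [Nat.Coprime] at this
        omega
      omega
    set a := 2*m - t with ha
    have ha1 : 1 ≤ a := by omega
    have ham : a < m := by omega
    have haodd : a % 2 = 1 := by omega
    have hacop : Nat.Coprime a (2*m) := by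
      have h1 : Nat.gcd a (2*m) ∣ t := by
        have := Nat.dvd_sub (Nat.gcd_dvd_right a (2*m)) (Nat.gcd_dvd_left a (2*m))
        rwa [show 2*m - a = t by omega] at this
      have h2 : Nat.gcd a (2*m) ∣ Nat.gcd t (2*m) := Nat.dvd_gcd h1 (Nat.gcd_dvd_right a (2*m))
      rw [Nat.Coprime] at hcop ⊢
      exact Nat.eq_one_of_dvd_one (hcop ▸ h2)
    by_cases ha' : a = 1
    · right; omega
    have ha3 : 3 ≤ a := by omega
    have H' : ∀ r, 1 ≤ r → r < m → (d ∣ r ↔ m < (a*r) % (2*m)) := by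
      intro r h1 h2
      rw [H r h1 h2]
      have hmodsum : (t*r + a*r) % (2*m) = 0 := by
        have e : t*r + a*r = (2*m)*r := by
          have : t + a = 2*m := by omega
          calc t*r + a*r = (t+a)*r := by ring
          _ = (2*m)*r := by rw [this]
        rw [e]; exact Nat.mul_mod_right (2*m) r
      have hne2 : (a*r) % (2*m) ≠ 0 := by
        intro h
        have hdd : (2*m) ∣ a * r := Nat.dvd_of_mod_eq_zero h
        have h9 := (Nat.Coprime.dvd_of_dvd_mul_left (Nat.coprime_comm.mp hacop) hdd)
        have := Nat.le_of_dvd (by omega) h9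
        omega
      have hne1 : (t*r) % (2*m) ≠ 0 := by
        intro h
        have hdd : (2*m) ∣ t * r := Nat.dvd_of_mod_eq_zero h
        have h9 := (Nat.Coprime.dvd_of_dvd_mul_left (Nat.coprime_comm.mp hcop) hdd)
        have := Nat.le_of_dvd (by omega) h9
        omega
      have hb1 : (t*r) % (2*m) < 2*m := Nat.mod_lt _ (by omega)
      have hb2 : (a*r) % (2*m) < 2*m := Nat.mod_lt _ (by omega)
      have hsum : (t*r) % (2*m) + (a*r) % (2*m) = 2*m := by
        have h0 : ((t*r) % (2*m) + (a*r) % (2*m)) % (2*m) = 0 := by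
          rw [Nat.add_mod] at hmodsum
          simpa [Nat.mod_mod_of_dvd] using hmodsum
        have hdvd : (2*m) ∣ ((t*r) % (2*m) + (a*r) % (2*m)) := Nat.dvd_of_mod_eq_zero h0
        have h5 : (2*m) ∣ ((t*r) % (2*m) + (a*r) % (2*m) - 2*m) :=
          Nat.dvd_sub hdvd (dvd_refl (2*m))
        have h6 := Nat.le_of_dvd (by omega) hdvd
        have h7 := Nat.eq_zero_of_dvd_of_lt h5 (by omega)
        omega
      omega
    obtain ⟨Q, R, hQR, hR⟩ : ∃ Q R, m = a*Q + R ∧ R < a :=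
      ⟨m/a, m%a, (Nat.div_add_mod m a).symm, Nat.mod_lt m (by omega)⟩
    have hQ3 : 3*Q ≤ a*Q := Nat.mul_le_mul_right Q ha3
    have hRne : R ≠ 0 := by
      intro h
      have hdvd : a ∣ m := ⟨Q, by omega⟩
      have : Nat.gcd a (2*m) = a := Nat.gcd_eq_left (hdvd.mul_left 2)
      rw [Nat.Coprime] at hacop; omega
    set k := Q + 1 with hk
    have e1 : a*k = a*Q + a := by rw [hk, Nat.mul_add, Nat.mul_one]
    have hkm : k < m := by omega
    have c1 : ∀ r, 1 ≤ r → r < k → ¬ d ∣ r := by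
      intro r h1 h2 hdvd
      have har0 : a*r ≤ a*Q := Nat.mul_le_mul_left a (by omega)
      have harne : a*r ≠ m := by
        intro h
        have hdvd' : a ∣ m := ⟨r, h.symm⟩
        have : Nat.gcd a (2*m) = a := Nat.gcd_eq_left (hdvd'.mul_left 2)
        rw [Nat.Coprime] at hacop; omega
      have har : a*r < m := by omega
      have := (H' r h1 (by omega)).mp hdvd
      rw [Nat.mod_eq_of_lt (by omega)] at this
      omega
    have c2 : d ∣ k := by
      apply (H' k (by omega) hkm).mpr
      rw [Nat.mod_eq_of_lt (by omega)]
      omega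
    have hdk : d = k := by
      have hle : d ≤ k := Nat.le_of_dvd (by omega) c2
      rcases eq_or_lt_of_le hle with h | h
      · exact h
      · exact absurd (dvd_refl d) (c1 d (by omega) h)
    -- now d = k = Q+1 ≥ 3 so Q ≥ 2 so 2a ≤ aQ ≤ m, and m odd so 2a < m
    have hQ2 : 2 ≤ Q := by omega
    have h2a : 2*a ≤ a*Q := by
      calc 2*a = a*2 := by ring
      _ ≤ a*Q := Nat.mul_le_mul_left a hQ2
    have h2am : 2*a < m := by
      rcases eq_or_lt_of_le (show 2*a ≤ m by omega) with h | h
      · omega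
      · exact h
    have c3 : d ∣ k + 1 := by
      apply (H' (k+1) (by omega) (by omega)).mpr
      have e2 : a*(k+1) = a*Q + a + a := by rw [hk]; ring
      rw [Nat.mod_eq_of_lt (by omega)]
      omega
    have h9 : d ∣ 1 := by
      have hh := Nat.dvd_sub c3 c2
      rwa [show k+1-k = 1 from by omega] at hh
    have := Nat.le_of_dvd one_pos h9
    omega


private lemma slce_sum_pow (p : ℕ) [Fact p.Prime] (i : ℕ) :
    (∑ x : (ZMod p)ˣ, ((x : ZMod p) ^ i)) = if (p - 1) ∣ i then (-1 : ZMod p) else 0 := by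
  classical
  have h := FiniteField.sum_pow_units (ZMod p) i
  rw [ZMod.card] at h
  rw [← h]

private lemma slce_choose_ne (p : ℕ) (hp : p.Prime) (m r : ℕ) (hm : m ≤ r) (hr : r ≤ p - 2) :
    ¬ (p ∣ Nat.choose r m) := by
  intro h
  have h1 : Nat.choose r m * Nat.factorial m * Nat.factorial (r - m) = Nat.factorial r :=
    Nat.choose_mul_factorial_mul_factorial hm
  have h2 : p ∣ Nat.factorial r := h1 ▸ ((h.mul_right _).mul_right _)
  have h3 : p ≤ r := (Nat.Prime.dvd_factorial hp).mp h2
  have := hp.two_le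
  omega

private lemma slce_key (p : ℕ) [Fact p.Prime] (m : ℕ) (hm2 : p - 1 = 2*m)
    (hmodd : m % 2 = 1)
    (St : Finset (ZMod p)) (hSt : ∀ x, x ∈ St ↔ (x ≠ 0 ∧ ¬ IsSquare (x + 1)))
    (r : ℕ) (h1 : 1 ≤ r) (h2 : r < p - 1) :
    (2 : ZMod p) * (∑ x ∈ St, x ^ r) =
      -(-1 : ZMod p)^r * (1 + if m ≤ r then (Nat.choose r m : ZMod p) else 0) := by
  classical
  have hp2 : p = 2*m + 1 := by
    have := (Fact.out : p.Prime).two_le; omega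
  have hm1 : 1 ≤ m := by omega
  have h2ne : (2 : ZMod p) ≠ 0 := by
    have : ((2:ℕ) : ZMod p) ≠ 0 := by
      rw [Ne, ZMod.natCast_eq_zero_iff]
      intro h
      have := Nat.le_of_dvd (by norm_num) h
      omega
    simpa using this
  -- each unit has y^m = ±1 matching squareness
  have hunit : ∀ y : (ZMod p)ˣ,
      (((y : ZMod p)) ^ m = 1 ∧ IsSquare ((y : ZMod p))) ∨
      (((y : ZMod p)) ^ m = -1 ∧ ¬ IsSquare ((y : ZMod p))) := by
    intro y
    have hy0 : (y : ZMod p) ≠ 0 := Units.ne_zero y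
    have hsq : ((y : ZMod p) ^ m) * ((y : ZMod p) ^ m) = 1 := by
      rw [← pow_add, show m + m = p - 1 by omega]
      exact ZMod.pow_card_sub_one_eq_one hy0
    have hec := ZMod.euler_criterion p hy0
    rw [show p / 2 = m by omega] at hec
    rcases mul_self_eq_one_iff.mp hsq with h | h
    · exact Or.inl ⟨h, hec.mpr h⟩
    · refine Or.inr ⟨h, fun hs => ?_⟩
      rw [hec, h] at hs
      have h21 : (2 : ZMod p) = 0 := by linear_combination -hs
      exact h2ne h21
  -- rewrite sum over St as a sum over nonsquare units
  set F : Finset (ZMod p)ˣ := Finset.univ.filter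
    (fun y : (ZMod p)ˣ => ¬ IsSquare ((y : ZMod p))) with hF
  have himg : St = Finset.image (fun y : (ZMod p)ˣ => (y : ZMod p) - 1) F := by
    ext x
    simp only [Finset.mem_image, hF, Finset.mem_filter, Finset.mem_univ, true_and, hSt]
    constructor
    · rintro ⟨hx0, hxs⟩
      have hx1 : x + 1 ≠ 0 := fun h => hxs (h ▸ (IsSquare.zero))
      refine ⟨Units.mk0 (x+1) hx1, by simpa using hxs, by simp⟩
    · rintro ⟨y, hy, rfl⟩
      refine ⟨?_, ?_⟩
      · intro h0
        rw [sub_eq_zero] at h0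
        exact hy (h0 ▸ IsSquare.one)
      · rw [sub_add_cancel]
        exact hy
  have hinj : Set.InjOn (fun y : (ZMod p)ˣ => (y : ZMod p) - 1) F := by
    intro u _ v _ h
    exact Units.ext (by simpa [sub_left_inj] using h)
  have hsum1 : (∑ x ∈ St, x ^ r) = ∑ y ∈ F, ((y : ZMod p) - 1) ^ r := by
    rw [himg, Finset.sum_image (fun a ha b hb h => hinj ha hb h)]
  -- main reduction to a full units sum
  have hmain : (2 : ZMod p) * (∑ x ∈ St, x ^ r)
      = ∑ y : (ZMod p)ˣ, (1 - (y : ZMod p)^m) * ((y : ZMod p) - 1) ^ r := by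
    rw [hsum1, Finset.mul_sum]
    rw [← Finset.sum_filter_add_sum_filter_not Finset.univ
      (fun y : (ZMod p)ˣ => ¬ IsSquare ((y : ZMod p)))
      (fun y => (1 - (y : ZMod p)^m) * ((y : ZMod p) - 1) ^ r)]
    rw [← hF]
    have e1 : ∑ y ∈ F, (1 - (y : ZMod p)^m) * ((y : ZMod p) - 1) ^ r
        = ∑ y ∈ F, (2:ZMod p) * ((y : ZMod p) - 1) ^ r := by
      apply Finset.sum_congr rfl
      intro y hy
      rw [hF, Finset.mem_filter] at hy
      rcases hunit y with ⟨_, hs⟩ | ⟨hpow, _⟩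
      · exact absurd hs hy.2
      · rw [hpow]; ring
    have e2 : ∑ y ∈ Finset.univ.filter
          (fun y : (ZMod p)ˣ => ¬ ¬ IsSquare ((y : ZMod p))),
          (1 - (y : ZMod p)^m) * ((y : ZMod p) - 1) ^ r = 0 := by
      apply Finset.sum_eq_zero
      intro y hy
      rw [Finset.mem_filter, not_not] at hy
      rcases hunit y with ⟨hpow, _⟩ | ⟨_, hs⟩
      · rw [hpow]; ring
      · exact absurd hy.2 hs
    rw [e1, e2, add_zero]
  rw [hmain]
  -- expand the binomial
  have expand : ∀ Y : ZMod p, (Y - 1)^r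
      = ∑ k ∈ Finset.range (r+1), Y^k * (-1:ZMod p)^(r-k) * (Nat.choose r k : ZMod p) := by
    intro Y
    have := add_pow Y (-1 : ZMod p) r
    simpa [sub_eq_add_neg] using this
  have hsplit : ∑ y : (ZMod p)ˣ, (1 - (y : ZMod p)^m) * ((y : ZMod p) - 1) ^ r
      = (∑ y : (ZMod p)ˣ, ((y : ZMod p) - 1) ^ r)
        - ∑ y : (ZMod p)ˣ, (y : ZMod p)^m * ((y : ZMod p) - 1) ^ r := by
    rw [← Finset.sum_sub_distrib]
    apply Finset.sum_congr rfl
    intro y _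
    ring
  rw [hsplit]
  -- first sum
  have hT1 : (∑ y : (ZMod p)ˣ, ((y : ZMod p) - 1) ^ r) = -(-1:ZMod p)^r := by
    calc (∑ y : (ZMod p)ˣ, ((y : ZMod p) - 1) ^ r)
        = ∑ y : (ZMod p)ˣ, ∑ k ∈ Finset.range (r+1),
            ((y : ZMod p))^k * ((-1:ZMod p)^(r-k) * (Nat.choose r k : ZMod p)) := by
          apply Finset.sum_congr rfl
          intro y _
          rw [expand]
          exact Finset.sum_congr rfl (fun k _ => by ring)
      _ = ∑ k ∈ Finset.range (r+1), ∑ y : (ZMod p)ˣ,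
            ((y : ZMod p))^k * ((-1:ZMod p)^(r-k) * (Nat.choose r k : ZMod p)) :=
          Finset.sum_comm
      _ = ∑ k ∈ Finset.range (r+1),
            (if (p-1) ∣ k then (-1:ZMod p) else 0) * ((-1:ZMod p)^(r-k) * (Nat.choose r k : ZMod p)) := by
          apply Finset.sum_congr rfl
          intro k _
          rw [← Finset.sum_mul, slce_sum_pow]
      _ = -(-1:ZMod p)^r := by
          rw [Finset.sum_eq_single 0]
          · simp
          · intro k hk hk0
            rw [if_neg, zero_mul]
            intro hdvd
            have := Nat.le_of_dvd (by omega) hdvd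
            rw [Finset.mem_range] at hk
            omega
          · intro h
            exact absurd (Finset.mem_range.mpr (by omega)) h
  -- second sum
  have hT2 : (∑ y : (ZMod p)ˣ, (y : ZMod p)^m * ((y : ZMod p) - 1) ^ r)
      = if m ≤ r then ((-1:ZMod p)^r * (Nat.choose r m : ZMod p)) else 0 := by
    calc (∑ y : (ZMod p)ˣ, (y : ZMod p)^m * ((y : ZMod p) - 1) ^ r)
        = ∑ y : (ZMod p)ˣ, ∑ k ∈ Finset.range (r+1),
            ((y : ZMod p))^(m+k) * ((-1:ZMod p)^(r-k) * (Nat.choose r k : ZMod p)) := by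
          apply Finset.sum_congr rfl
          intro y _
          rw [expand, Finset.mul_sum]
          apply Finset.sum_congr rfl
          intro k _
          rw [pow_add]
          ring
      _ = ∑ k ∈ Finset.range (r+1),
            (if (p-1) ∣ (m+k) then (-1:ZMod p) else 0) * ((-1:ZMod p)^(r-k) * (Nat.choose r k : ZMod p)) := by
          rw [Finset.sum_comm]
          apply Finset.sum_congr rfl
          intro k _
          rw [← Finset.sum_mul, slce_sum_pow]
      _ = if m ≤ r then ((-1:ZMod p)^r * (Nat.choose r m : ZMod p)) else 0 := by
          by_cases hmr : m ≤ r
          · rw [if_pos hmr, Finset.sum_eq_single m]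
            · rw [if_pos (by rw [hm2]; exact ⟨1, by ring⟩)]
              have hsign : (-1:ZMod p)^(r-m) * (-1:ZMod p)^m = (-1:ZMod p)^r := by
                rw [← pow_add, Nat.sub_add_cancel hmr]
              have hmneg : (-1:ZMod p)^m = -1 := Odd.neg_one_pow (Nat.odd_iff.mpr hmodd)
              rw [hmneg] at hsign
              linear_combination (Nat.choose r m : ZMod p) * hsign
            · intro k hk hkm
              rw [Finset.mem_range] at hk
              rw [if_neg, zero_mul]
              intro hdvd
              rw [hm2] at hdvd
              obtain ⟨c, hc⟩ := hdvd
              have hcb : c ≤ 1 := by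
                by_contra hcb
                have : 2*m*2 ≤ 2*m*c := Nat.mul_le_mul_left _ (by omega)
                omega
              interval_cases c <;> omega
            · intro h
              exact absurd (Finset.mem_range.mpr (by omega)) h
          · rw [if_neg hmr]
            apply Finset.sum_eq_zero
            intro k hk
            rw [Finset.mem_range] at hk
            rw [if_neg, zero_mul]
            intro hdvd
            rw [hm2] at hdvd
            have := Nat.le_of_dvd (by omega) hdvd
            omega
  rw [hT1, hT2]
  split_ifs <;> ring

private lemma slce_p3 (p : ℕ) (hp : p.Prime) (m : ℕ) (hm2 : p - 1 = 2*m)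
    (hmodd : m % 2 = 1)
    (t : (ZMod (p - 1))ˣ) (ht1 : t ≠ 1) (htm1 : t ≠ -1)
    (g : ZMod p) (hg : g ≠ 0)
    (St : Finset (ZMod p)) (hSt : ∀ x, x ∈ St ↔ (x ≠ 0 ∧ ¬ IsSquare (x + 1)))
    (himg : St.image (fun x : ZMod p => x ^ ((t : ZMod (p-1)).val))
      = St.image (fun s => g * s)) :
    False := by
  classical
  haveI : Fact p.Prime := ⟨hp⟩
  have hm1 : 1 ≤ m := by omega
  have hp3 : 3 ≤ p := by
    have := hp.two_le; omega
  haveI : NeZero (p - 1) := ⟨by omega⟩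
  haveI : Fact (1 < p - 1) := ⟨by omega⟩
  set τ := ((t : ZMod (p-1))).val with hτ
  have hτcop : Nat.Coprime τ (p-1) := ZMod.val_coe_unit_coprime t
  have hτlt : τ < p - 1 := ZMod.val_lt _
  have hτodd : τ % 2 = 1 := by
    rcases Nat.even_or_odd τ with he | ho
    · exfalso
      have h2 : (2:ℕ) ∣ Nat.gcd τ (p-1) := Nat.dvd_gcd he.two_dvd ⟨m, hm2⟩
      rw [Nat.Coprime] at hτcop
      omega
    · exact Nat.odd_iff.mp ho
  have h2ne : (2 : ZMod p) ≠ 0 := by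
    have h22 : ((2:ℕ) : ZMod p) ≠ 0 := by
      rw [Ne, ZMod.natCast_eq_zero_iff]
      intro h
      have := Nat.le_of_dvd (by norm_num) h
      omega
    simpa using h22
  -- members of St are nonzero
  have hmem0 : ∀ x ∈ St, x ≠ 0 := fun x hx => ((hSt x).mp hx).1
  -- injectivity of the power map on St
  set σ := (((t⁻¹ : (ZMod (p-1))ˣ) : ZMod (p-1))).val with hσ
  have hτσ : (τ * σ) % (p-1) = 1 := by
    have h0 : ((t : ZMod (p-1)) * ((t⁻¹ : (ZMod (p-1))ˣ) : ZMod (p-1))) = 1 :=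
      Units.mul_inv t
    have h1 := congrArg ZMod.val h0
    rw [ZMod.val_mul, ZMod.val_one] at h1
    exact h1
  have hfix : ∀ z : ZMod p, z ≠ 0 → (z ^ τ) ^ σ = z := by
    intro z hz
    rw [← pow_mul]
    have e : τ * σ = (p-1) * ((τ*σ)/(p-1)) + 1 := by
      conv_lhs => rw [← Nat.div_add_mod (τ*σ) (p-1)]
      rw [hτσ]
    rw [e, pow_add, pow_mul, ZMod.pow_card_sub_one_eq_one hz, one_pow, one_mul, pow_one]
  have hpow_inj : ∀ x ∈ St, ∀ y ∈ St, x ^ τ = y ^ τ → x = y := by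
    intro x hx y hy h
    rw [← hfix x (hmem0 x hx), ← hfix y (hmem0 y hy), h]
  have hmul_inj : ∀ x ∈ St, ∀ y ∈ St, g * x = g * y → x = y := by
    intro x _ y _ h
    exact mul_left_cancel₀ hg h
  -- multiplier power-sum relation
  have hA : ∀ r : ℕ, (∑ x ∈ St, x ^ (τ * r)) = g^r * ∑ x ∈ St, x ^ r := by
    intro r
    calc (∑ x ∈ St, x ^ (τ * r)) = ∑ x ∈ St, (x ^ τ) ^ r := by
          apply Finset.sum_congr rfl
          intro x _
          rw [← pow_mul]
      _ = ∑ y ∈ St.image (fun x : ZMod p => x ^ τ), y ^ r :=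
          (Finset.sum_image (fun x hx y hy h => hpow_inj x hx y hy h)).symm
      _ = ∑ y ∈ St.image (fun s => g * s), y ^ r := by rw [himg]
      _ = ∑ x ∈ St, (g * x) ^ r :=
          Finset.sum_image (fun x hx y hy h => hmul_inj x hx y hy h)
      _ = g^r * ∑ x ∈ St, x ^ r := by
          rw [Finset.mul_sum]
          apply Finset.sum_congr rfl
          intro x _
          rw [mul_pow]
  -- exponent reduction
  have hred : ∀ e : ℕ, (∑ x ∈ St, x ^ e) = ∑ x ∈ St, x ^ (e % (p-1)) := by
    intro e
    apply Finset.sum_congr rfl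
    intro x hx
    conv_lhs => rw [← Nat.div_add_mod e (p-1)]
    rw [pow_add, pow_mul, ZMod.pow_card_sub_one_eq_one (hmem0 x hx), one_pow, one_mul]
  -- the central equation
  have hEQ : ∀ r, 1 ≤ r → r < p - 1 →
      (1 + if m ≤ (τ*r) % (p-1) then (Nat.choose ((τ*r) % (p-1)) m : ZMod p) else 0)
        = g^r * (1 + if m ≤ r then (Nat.choose r m : ZMod p) else 0) := by
    intro r hr1 hr2
    set ρ := (τ*r) % (p-1) with hρ
    have hρlt : ρ < p - 1 := Nat.mod_lt _ (by omega)
    have hρpos : 1 ≤ ρ := by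
      rcases Nat.eq_zero_or_pos ρ with h | h
      · exfalso
        have hdvd : (p-1) ∣ τ * r := Nat.dvd_of_mod_eq_zero h
        have := (Nat.Coprime.dvd_of_dvd_mul_left
          (Nat.coprime_comm.mp hτcop) hdvd)
        have := Nat.le_of_dvd (by omega) this
        omega
      · exact h
    have hpar : ρ % 2 = r % 2 := by
      have e1 : (τ*r) % (p-1) % 2 = (τ*r) % 2 := Nat.mod_mod_of_dvd _ ⟨m, hm2⟩
      have e2 : (τ*r) % 2 = (τ % 2) * (r % 2) % 2 := Nat.mul_mod τ r 2
      rw [hρ, e1, e2, hτodd]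
      omega
    have hsgn : (-1 : ZMod p)^ρ = (-1 : ZMod p)^r := by
      rcases Nat.even_or_odd r with h | h
      · rw [Even.neg_one_pow h, Even.neg_one_pow (by rw [Nat.even_iff] at h ⊢; omega)]
      · rw [Odd.neg_one_pow h, Odd.neg_one_pow (by rw [Nat.odd_iff] at h ⊢; omega)]
    have k1 := slce_key p m hm2 hmodd St hSt ρ hρpos hρlt
    have k2 := slce_key p m hm2 hmodd St hSt r hr1 hr2
    have hchain : (2 : ZMod p) * (∑ x ∈ St, x ^ ρ) = g^r * ((2:ZMod p) * ∑ x ∈ St, x ^ r) := by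
      rw [hρ, ← hred (τ*r), hA r]
      ring
    rw [k1, k2, hsgn] at hchain
    have hne : (-(-1 : ZMod p)^r) ≠ 0 := by
      intro h
      rcases Nat.even_or_odd r with hh | hh
      · rw [Even.neg_one_pow hh] at h
        exact one_ne_zero (neg_eq_zero.mp h)
      · rw [Odd.neg_one_pow hh] at h
        simp at h
    apply mul_left_cancel₀ hne
    calc (-(-1 : ZMod p)^r) * (1 + if m ≤ ρ then (Nat.choose ρ m : ZMod p) else 0)
        = g ^ r * (-(-1:ZMod p) ^ r * (1 + if m ≤ r then (Nat.choose r m : ZMod p) else 0)) :=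
          hchain
      _ = (-(-1 : ZMod p)^r) * (g^r * (1 + if m ≤ r then (Nat.choose r m : ZMod p) else 0)) := by
          ring
  -- g^m = 1
  have hgm : g ^ m = 1 := by
    have hρm : (τ*m) % (p-1) = m := by
      obtain ⟨c, hc⟩ : ∃ c, τ = 2*c + 1 := ⟨τ/2, by omega⟩
      have e : τ*m = m + (2*m)*c := by rw [hc]; ring
      rw [hm2, e, Nat.add_mul_mod_self_left]
      exact Nat.mod_eq_of_lt (by omega)
    have h := hEQ m hm1 (by omega)
    rw [hρm, if_pos le_rfl, Nat.choose_self] at h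
    have h2 : (2 : ZMod p) = g^m * 2 := by
      calc (2 : ZMod p) = 1 + (1:ℕ) := by norm_num
      _ = g^m * (1 + (1:ℕ)) := by rw [← h]
      _ = g^m * 2 := by norm_num
    have := mul_right_cancel₀ h2ne (show (1:ZMod p) * 2 = g^m * 2 by rw [one_mul]; exact h2)
    exact this.symm
  -- the dichotomy for r < m
  have hE2 : ∀ r, 1 ≤ r → r < m → (g^r = 1 ↔ (τ*r) % (p-1) < m) := by
    intro r hr1 hrm
    have h := hEQ r hr1 (by omega)
    rw [if_neg (show ¬ m ≤ r by omega)] at h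
    set ρ := (τ*r) % (p-1) with hρ
    constructor
    · intro hgr
      rw [hgr] at h
      by_contra hge
      push_neg at hge
      rw [if_pos hge] at h
      have : (Nat.choose ρ m : ZMod p) = 0 := by linear_combination h
      rw [ZMod.natCast_eq_zero_iff] at this
      exact slce_choose_ne p hp m ρ hge (by
        have : ρ < p - 1 := Nat.mod_lt _ (by omega)
        omega) this
    · intro hlt
      rw [if_neg (show ¬ m ≤ ρ by omega)] at h
      linear_combination -h
  -- apply the combinatorial lemma
  set d := orderOf g with hd
  have hdm : d ∣ m := orderOf_dvd_of_pow_eq_one hgm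
  have hdpos : 0 < d := by
    rcases Nat.eq_zero_or_pos d with h | h
    · rw [h] at hdm
      have := Nat.eq_zero_of_zero_dvd hdm
      omega
    · exact h
  have H : ∀ r, 1 ≤ r → r < m → (d ∣ r ↔ (τ*r) % (2*m) < m) := by
    intro r h1 h2
    rw [← hm2, orderOf_dvd_iff_pow_eq_one]
    exact hE2 r h1 h2
  have := slce_nt m τ d (Nat.odd_iff.mpr hmodd) (by omega) (Nat.odd_iff.mpr hτodd)
    (by rw [← hm2]; exact hτcop) hdm hdpos H
  rcases this with h | h
  · apply ht1
    apply Units.ext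
    apply ZMod.val_injective
    rw [Units.val_one, ZMod.val_one, ← hτ, h]
  · apply htm1
    apply Units.ext
    apply ZMod.val_injective
    rw [Units.coe_neg_one]
    have hval : ((-1 : ZMod (p-1))).val = p - 1 - 1 := by
      have e0 : ((p - 1 - 1 : ℕ) : ZMod (p-1)) + 1 = 0 := by
        have h9 : (((p-1-1) + 1 : ℕ) : ZMod (p-1)) = 0 := by
          rw [show p-1-1+1 = p-1 by omega, ZMod.natCast_self]
        rw [Nat.cast_add, Nat.cast_one] at h9
        exact h9
      have e : ((p - 1 - 1 : ℕ) : ZMod (p-1)) = -1 := by linear_combination e0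
      rw [← e, ZMod.val_cast_of_lt (by omega)]
    rw [hval, ← hτ, h]
    omega


private lemma slce_stab (n : ℕ) (m : ℕ) (hnm : n = 2*m) (hme : m % 2 = 0) (hm4 : 4 ≤ m) :
    ∃ a : (ZMod n)ˣ, ((a : ZMod n)).val < n/2 ∧ a ≠ 1 ∧
      (fun j => a * j) '' {j : (ZMod n)ˣ | ((j : ZMod n)).val < n/2} =
        {j : (ZMod n)ˣ | ((j : ZMod n)).val < n/2} := by
  haveI : NeZero n := ⟨by omega⟩
  haveI : Fact (1 < n) := ⟨by omega⟩
  have hn2 : n / 2 = m := by omega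
  have hcop : Nat.Coprime (m-1) n := by
    set G := Nat.gcd (m-1) n with hG
    have gd1 : G ∣ m - 1 := Nat.gcd_dvd_left _ _
    have gd2 : G ∣ n := Nat.gcd_dvd_right _ _
    have h2 : G ∣ 2 := by
      have hh := Nat.dvd_sub gd2 (gd1.mul_left 2)
      rwa [show n - 2*(m-1) = 2 by omega] at hh
    have hGle : G ≤ 2 := Nat.le_of_dvd (by norm_num) h2
    have hGpos : 0 < G := Nat.pos_of_dvd_of_pos h2 (by norm_num)
    have hG2 : G ≠ 2 := by
      intro h
      rw [h] at gd1
      obtain ⟨c, hc⟩ := gd1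
      omega
    rw [Nat.Coprime]; omega
  set a : (ZMod n)ˣ := ZMod.unitOfCoprime (m-1) hcop with haz
  have haco : (a : ZMod n) = ((m-1 : ℕ) : ZMod n) := ZMod.coe_unitOfCoprime _ _
  have haval : ((a : ZMod n)).val = m - 1 := by
    rw [haco, ZMod.val_cast_of_lt (by omega)]
  -- every unit has odd val
  have hodd : ∀ j : (ZMod n)ˣ, ((j : ZMod n)).val % 2 = 1 := by
    intro j
    have hc := ZMod.val_coe_unit_coprime j
    rcases Nat.even_or_odd ((j : ZMod n)).val with he | ho
    · exfalso
      have h2 : 2 ∣ Nat.gcd ((j : ZMod n)).val n :=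
        Nat.dvd_gcd he.two_dvd ⟨m, hnm⟩
      rw [Nat.Coprime] at hc
      omega
    · exact Nat.odd_iff.mp ho
  have hvalpos : ∀ j : (ZMod n)ˣ, 0 < ((j : ZMod n)).val := by
    intro j
    rcases Nat.eq_zero_or_pos ((j : ZMod n)).val with h | h
    · exfalso
      have h0 : (j : ZMod n) = 0 := by
        have := (ZMod.val_eq_zero (j : ZMod n)).mp h
        exact this
      have := Units.mul_inv j
      rw [h0, zero_mul] at this
      exact zero_ne_one this
    · exact h
  -- key val computation
  have hkey : ∀ j : (ZMod n)ˣ, ((j : ZMod n)).val < m →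
      (((a * j : (ZMod n)ˣ) : ZMod n)).val = m - ((j : ZMod n)).val := by
    intro j hj
    set v := ((j : ZMod n)).val with hv
    have hvo := hodd j
    have hvp := hvalpos j
    obtain ⟨c, hc⟩ : ∃ c, v = 2*c + 1 := ⟨v/2, by omega⟩
    have e0 : ((a * j : (ZMod n)ˣ) : ZMod n) = (a : ZMod n) * (j : ZMod n) := rfl
    rw [e0, ZMod.val_mul, haval, ← hv]
    have e1 : (m-1)*v = m*v - v := by rw [Nat.sub_mul, one_mul]
    have e2 : m*v = 2*m*c + m := by rw [hc]; ring
    have e3 : (m-1)*v = (m - v) + 2*m*c := by omega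
    rw [e3, hnm]
    rw [show (m - v) + 2*m*c = (m - v) + (2*m)*c from by ring]
    rw [Nat.add_mul_mod_self_left]
    exact Nat.mod_eq_of_lt (by omega)
  have haa : a * a = 1 := by
    apply Units.ext
    rw [Units.val_mul, Units.val_one, haco, ← Nat.cast_mul]
    obtain ⟨w, hw⟩ : ∃ w, m = 2*w + 2 := ⟨m/2 - 1, by omega⟩
    have e : (m-1)*(m-1) = n*w + 1 := by
      rw [show m-1 = 2*w+1 from by omega, hnm, hw]; ring
    rw [e]
    push_cast [ZMod.natCast_self]
    ring
  refine ⟨a, ?_, ?_, ?_⟩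
  · rw [haval, hn2]; omega
  · intro h
    rw [h] at haval
    simp only [Units.val_one, ZMod.val_one] at haval
    omega
  · ext j
    simp only [Set.mem_image, Set.mem_setOf_eq, hn2]
    constructor
    · rintro ⟨i, hi, rfl⟩
      rw [hkey i hi]
      have := hvalpos i
      omega
    · intro hj
      refine ⟨a * j, ?_, ?_⟩
      · rw [hkey j hj]
        have := hvalpos j
        omega
      · rw [← mul_assoc, haa, one_mul]


/-- If `t ≠ ±1` is a multiplier of the SLCE almost difference set
over `𝔽_p^*`, then there exists `a ∈ S₁`, `a ≠ 1`, with `a·S₁ = S₁`, where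
`S₁` is the set of units mod `p-1` with least positive residue below `(p-1)/2`. -/
theorem slce_multiplier_gives_S1_stabilizer
    (p : ℕ) (hp : p.Prime) (hodd : p ≠ 2)
    (S : Set (ZMod p)) (hS : S = {x : ZMod p | x ≠ 0 ∧ ¬ IsSquare (x + 1)})
    (S₁ : Set (ZMod (p - 1))ˣ)
    (hS₁ : S₁ = {j : (ZMod (p - 1))ˣ | ((j : ZMod (p - 1))).val < (p - 1) / 2})
    (t : (ZMod (p - 1))ˣ) (ht1 : t ≠ 1) (htm1 : t ≠ -1)
    (ht : ∃ g : ZMod p, g ≠ 0 ∧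
      (fun x : ZMod p => x ^ ((t : ZMod (p - 1)).val)) '' S = (fun s => g * s) '' S) :
    ∃ a ∈ S₁, a ≠ 1 ∧ (fun j => a * j) '' S₁ = S₁ := by
  classical
  haveI : Fact p.Prime := ⟨hp⟩
  have hp3 : 3 ≤ p := by
    have := hp.two_le
    omega
  have hpodd : p % 2 = 1 := Nat.odd_iff.mp (hp.odd_of_ne_two hodd)
  by_cases h4 : p % 4 = 1
  · -- p ≡ 1 (mod 4) : exhibit the stabilizer directly
    by_cases h5 : p = 5
    · exfalso
      subst h5
      have hdi : ∀ u : (ZMod (5-1))ˣ, u = 1 ∨ u = -1 := by decide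
      rcases hdi t with h | h
      · exact ht1 h
      · exact htm1 h
    · have h9 : p ≠ 9 := by
        intro h
        rw [h] at hp
        norm_num at hp
      have hp13 : 13 ≤ p := by omega
      obtain ⟨a, ha1, ha2, ha3⟩ := slce_stab (p-1) ((p-1)/2) (by omega) (by omega) (by omega)
      refine ⟨a, ?_, ha2, ?_⟩
      · rw [hS₁]; exact ha1
      · rw [hS₁]; exact ha3
  · -- p ≡ 3 (mod 4) : the multiplier hypothesis is contradictory
    exfalso
    have h43 : p % 4 = 3 := by omega
    obtain ⟨g, hg, himgset⟩ := ht
    set St : Finset (ZMod p) := (S.toFinite).toFinset with hStdef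
    have hStmem : ∀ x, x ∈ St ↔ (x ≠ 0 ∧ ¬ IsSquare (x + 1)) := by
      intro x
      rw [hStdef, Set.Finite.mem_toFinset, hS]
      exact Iff.rfl
    have himgF : St.image (fun x : ZMod p => x ^ ((t : ZMod (p-1)).val))
        = St.image (fun s => g * s) := by
      apply Finset.coe_injective
      rw [Finset.coe_image, Finset.coe_image, Set.Finite.coe_toFinset]
      exact himgset
    exact slce_p3 p hp ((p-1)/2) (by omega) (by omega) t ht1 htm1 g hg St hStmem himgF
end

section
/- Let p be a prime with p ≡ 3 (mod 4) and let S be the SLCE almost difference set over 𝔽_p^*. Then the multiplier group of S is trivial: every unit t of ℤ/(p-1)ℤ that is a multiplier of S equals 1. -/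
open Finset

namespace SLCE9

variable {p n : ℕ}

lemma pow_reduce [Fact p.Prime] {x : ZMod p} (hx : x ≠ 0) (a : ℕ) :
    x ^ a = x ^ (a % (p - 1)) := by
  conv_lhs => rw [← Nat.div_add_mod a (p - 1)]
  rw [pow_add, pow_mul, ZMod.pow_card_sub_one_eq_one hx, one_pow, one_mul]

lemma pow_congr' [Fact p.Prime] {x : ZMod p} (hx : x ≠ 0) {a b : ℕ}
    (h : a % (p - 1) = b % (p - 1)) : x ^ a = x ^ b := by
  rw [pow_reduce hx a, pow_reduce hx b, h]

/-- power sums over nonzero elements -/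
lemma sum_pow_nonzero [Fact p.Prime] (e : ℕ) :
    ∑ x ∈ (univ : Finset (ZMod p)).erase 0, x ^ e
      = if (p - 1) ∣ e then -1 else 0 := by
  have h2 : 2 ≤ p := (Fact.out : p.Prime).two_le
  have hp1 : 0 < p - 1 := by omega
  by_cases hd : (p - 1) ∣ e
  · rw [if_pos hd]
    have he : ∀ x ∈ (univ : Finset (ZMod p)).erase 0, x ^ e = 1 := by
      intro x hx
      have hx0 : x ≠ 0 := (Finset.mem_erase.mp hx).1
      have hm : e % (p - 1) = 0 % (p - 1) := by
        obtain ⟨c, rfl⟩ := hd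
        simp [Nat.mul_mod_right]
      rw [pow_congr' hx0 hm, pow_zero]
    rw [Finset.sum_congr rfl he, Finset.sum_const, nsmul_eq_mul, mul_one]
    rw [Finset.card_erase_of_mem (Finset.mem_univ _), Finset.card_univ, ZMod.card]
    have : ((p - 1 : ℕ) : ZMod p) = (p : ZMod p) - 1 := by
      have : (1:ℕ) ≤ p := by omega
      push_cast [Nat.cast_sub this]
      ring
    rw [this, ZMod.natCast_self, zero_sub]
  · rw [if_neg hd]
    have he : ∀ x ∈ (univ : Finset (ZMod p)).erase 0, x ^ e = x ^ (e % (p-1)) := by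
      intro x hx
      exact pow_reduce (Finset.mem_erase.mp hx).1 e
    rw [Finset.sum_congr rfl he]
    have h0 : (0 : ZMod p) ^ (e % (p-1)) = 0 := by
      apply zero_pow
      intro h
      exact hd (by omega)
    rw [Finset.sum_erase (f := fun x : ZMod p => x ^ (e % (p-1))) (a := (0 : ZMod p)) univ h0]
    have := FiniteField.sum_pow_lt_card_sub_one (ZMod p) (e % (p-1))
      (by rw [ZMod.card]; exact Nat.mod_lt _ hp1)
    exact this

lemma isSquare_zero' : IsSquare (0 : ZMod p) := ⟨0, (mul_zero 0).symm⟩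

lemma two_nz [Fact p.Prime] (hpn : p = 2*n+1) (hn1 : 1 ≤ n) : (2 : ZMod p) ≠ 0 := by
  intro h
  have : ((2:ℕ) : ZMod p) = 0 := by exact_mod_cast h
  rw [ZMod.natCast_eq_zero_iff] at this
  have := Nat.le_of_dvd (by omega) this
  omega

lemma pow_n_of_square [Fact p.Prime] (hpn : p = 2*n+1) {y : ZMod p}
    (hy0 : y ≠ 0) (hy : IsSquare y) : y ^ n = 1 := by
  have h := (ZMod.euler_criterion p hy0).mp hy
  have hd : p / 2 = n := by omega
  rwa [hd] at h

lemma pow_n_of_nonsquare [Fact p.Prime] (hpn : p = 2*n+1) {y : ZMod p}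
    (hy : ¬ IsSquare y) : y ^ n = -1 := by
  have hy0 : y ≠ 0 := by rintro rfl; exact hy isSquare_zero'
  have h1 : y ^ (p - 1) = 1 := ZMod.pow_card_sub_one_eq_one hy0
  have h2 : (y ^ n - 1) * (y ^ n + 1) = 0 := by
    have h3 : (y ^ n) * (y ^ n) = 1 := by
      rw [← pow_add]
      have he : n + n = p - 1 := by omega
      rw [he, h1]
    linear_combination h3
  rcases mul_eq_zero.mp h2 with h | h
  · exfalso
    apply hy
    apply (ZMod.euler_criterion p hy0).mpr
    have hd : p / 2 = n := by omega
    rw [hd]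
    exact sub_eq_zero.mp h
  · exact eq_neg_of_add_eq_zero_left h

open scoped Classical in
/-- the finset of nonsquares -/
noncomputable def NS (p : ℕ) [NeZero p] : Finset (ZMod p) :=
  univ.filter (fun y => ¬ IsSquare y)

lemma Mval [Fact p.Prime] (hpn : p = 2*n+1) (hn1 : 1 ≤ n) (j : ℕ) (hj : j ≤ 2*n - 1) :
    ∑ y ∈ NS p, y ^ j
      = if j = 0 then -(2⁻¹ : ZMod p) else if j = n then 2⁻¹ else 0 := by
  have h2z : (2 : ZMod p) ≠ 0 := two_nz hpn hn1
  have step1 : ∑ y ∈ NS p, y ^ j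
      = ∑ y ∈ (univ : Finset (ZMod p)).erase 0,
          (if ¬ IsSquare y then y ^ j else 0) := by
    rw [NS, Finset.sum_filter]
    rw [← Finset.sum_erase (f := fun y : ZMod p => if ¬ IsSquare y then y ^ j else 0)
        (a := (0:ZMod p)) univ (by simp [isSquare_zero'])]
  have step2 : ∀ y ∈ (univ : Finset (ZMod p)).erase 0,
      (if ¬ IsSquare y then y ^ j else 0) = 2⁻¹ * (y ^ j - y ^ (j + n)) := by
    intro y hy
    have hy0 : y ≠ 0 := (Finset.mem_erase.mp hy).1
    by_cases hsq : IsSquare y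
    · rw [if_neg (by simpa using hsq), pow_add, pow_n_of_square hpn hy0 hsq]
      simp
    · rw [if_pos hsq, pow_add, pow_n_of_nonsquare hpn hsq, mul_neg_one, sub_neg_eq_add,
        ← two_mul, ← mul_assoc, inv_mul_cancel₀ h2z, one_mul]
  rw [step1, Finset.sum_congr rfl step2, ← Finset.mul_sum, Finset.sum_sub_distrib,
    sum_pow_nonzero j, sum_pow_nonzero (j + n)]
  have hp1 : p - 1 = 2*n := by omega
  by_cases hj0 : j = 0
  · subst hj0
    rw [if_pos (dvd_zero _), if_pos rfl,
      if_neg (show ¬ (p-1) ∣ (0+n) by rw [hp1]; intro h; have := Nat.le_of_dvd (by omega) h; omega)]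
    ring
  · by_cases hjn : j = n
    · rw [if_neg (show ¬ (p-1) ∣ j by rw [hp1, hjn]; intro h; have := Nat.le_of_dvd (by omega) h; omega),
        if_pos (show (p-1) ∣ (j+n) by rw [hp1, hjn]; exact ⟨1, by omega⟩),
        if_neg hj0, if_pos hjn]
      ring
    · rw [if_neg (show ¬ (p-1) ∣ j by rw [hp1]; intro h; have := Nat.le_of_dvd (by omega) h; omega),
        if_neg (show ¬ (p-1) ∣ (j+n) by
          rw [hp1]
          rintro ⟨c, hc⟩
          have hc1 : c ≠ 0 := by rintro rfl; omega
          have hc2 : c ≠ 1 := by rintro rfl; omega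
          have hge : 2*n*2 ≤ 2*n*c := Nat.mul_le_mul_left _ (by omega)
          omega),
        if_neg hj0, if_neg hjn]
      ring

open scoped Classical in
/-- the SLCE set as a finset -/
noncomputable def Sfin (p : ℕ) [NeZero p] : Finset (ZMod p) :=
  univ.filter (fun x => x ≠ 0 ∧ ¬ IsSquare (x + 1))

/-- power sums over the SLCE set -/
noncomputable def Psum (p : ℕ) [NeZero p] (k : ℕ) : ZMod p := ∑ x ∈ Sfin p, x ^ k

lemma Sfin_eq_image [NeZero p] : Sfin p = (NS p).image (fun y => y - 1) := by
  classical
  ext x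
  simp only [Sfin, NS, Finset.mem_filter, Finset.mem_image, Finset.mem_univ, true_and]
  constructor
  · rintro ⟨hx0, hxs⟩
    exact ⟨x + 1, hxs, by ring⟩
  · rintro ⟨y, hy, rfl⟩
    refine ⟨?_, ?_⟩
    · intro h0
      apply hy
      have hy1 : y = 1 := by linear_combination h0
      rw [hy1]; exact IsSquare.one
    · have hyy : y - 1 + 1 = y := by ring
      rw [hyy]; exact hy

lemma Psum_eq [NeZero p] (k : ℕ) : Psum p k = ∑ y ∈ NS p, (y - 1) ^ k := by
  rw [Psum, Sfin_eq_image, Finset.sum_image]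
  intro a _ b _ h
  linear_combination h

lemma Pval [Fact p.Prime] (hpn : p = 2*n+1) (hn : Odd n) (hn1 : 1 ≤ n)
    {k : ℕ} (hk1 : 1 ≤ k) (hk2 : k ≤ 2*n-1) :
    Psum p k = (-1)^(k+1) * (1 + (Nat.choose k n : ZMod p)) * 2⁻¹ := by
  rw [Psum_eq]
  have expand : ∀ y : ZMod p, (y - 1)^k
      = ∑ j ∈ range (k+1), y^j * ((-1)^(k-j) * (Nat.choose k j : ZMod p)) := by
    intro y
    have h := add_pow y (-1 : ZMod p) k
    rw [show y - 1 = y + (-1) by ring, h]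
    exact Finset.sum_congr rfl (fun j _ => by push_cast; ring)
  rw [Finset.sum_congr rfl (fun y _ => expand y), Finset.sum_comm]
  have inner : ∀ j ∈ range (k+1),
      (∑ y ∈ NS p, y^j * ((-1)^(k-j) * (Nat.choose k j : ZMod p)))
      = (if j = 0 then -(2⁻¹ : ZMod p) * ((-1)^k) else 0)
        + (if j = n then (2⁻¹ : ZMod p) * ((-1)^(k-n) * (Nat.choose k n : ZMod p)) else 0) := by
    intro j hj
    have hjk : j ≤ 2*n - 1 := by
      have := Finset.mem_range.mp hj; omega
    rw [← Finset.sum_mul, Mval hpn hn1 j hjk]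
    by_cases hj0 : j = 0
    · subst hj0
      rw [if_pos rfl, if_pos rfl, if_neg (by omega)]
      simp [Nat.choose_zero_right]
    · rw [if_neg hj0, if_neg hj0]
      by_cases hjn : j = n
      · subst hjn
        rw [if_pos rfl, if_pos rfl]
        ring
      · rw [if_neg hjn, if_neg hjn]
        ring
  rw [Finset.sum_congr rfl inner, Finset.sum_add_distrib,
    Finset.sum_ite_eq' (range (k+1)) (0 : ℕ) (fun _ => -(2⁻¹ : ZMod p) * ((-1)^k)),
    Finset.sum_ite_eq' (range (k+1)) (n : ℕ)
      (fun _ => (2⁻¹ : ZMod p) * ((-1)^(k-n) * (Nat.choose k n : ZMod p))),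
    if_pos (Finset.mem_range.mpr (by omega))]
  by_cases hnk : n ≤ k
  · rw [if_pos (Finset.mem_range.mpr (by omega))]
    have hsgn : ((-1 : ZMod p))^(k-n) = -((-1)^k) := by
      have h1 : ((-1:ZMod p))^(k-n) * (-1)^n = (-1)^k := by
        rw [← pow_add]; congr 1; omega
      rw [hn.neg_one_pow] at h1
      linear_combination -h1
    rw [hsgn, pow_succ]
    ring
  · rw [if_neg (by simp; omega), Nat.choose_eq_zero_of_lt (by omega), Nat.cast_zero, pow_succ]
    ring

lemma nfact_sq [Fact p.Prime] (hpn : p = 2*n+1) (hn : Odd n) :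
    ((n.factorial : ℕ) : ZMod p) * ((n.factorial : ℕ) : ZMod p) = 1 := by
  have w : (((p-1).factorial : ℕ) : ZMod p) = -1 := ZMod.wilsons_lemma p
  have hfac : (p-1).factorial = ∏ i ∈ Ico 1 (2*n+1), i := by
    rw [show (2*n+1) = (p-1) + 1 by omega, Finset.prod_Ico_id_eq_factorial]
  rw [hfac, Nat.cast_prod] at w
  rw [← Finset.prod_Ico_consecutive (fun i : ℕ => ((i:ℕ) : ZMod p))
    (show 1 ≤ n+1 by omega) (show n+1 ≤ 2*n+1 by omega)] at w
  have hre : ∏ i ∈ Ico (n+1) (2*n+1), ((i:ℕ) : ZMod p)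
      = ∏ i ∈ Ico 1 (n+1), (-((i:ℕ) : ZMod p)) := by
    apply Finset.prod_nbij' (i := fun a => p - a) (j := fun b => p - b)
    · intro a ha
      have := Finset.mem_Ico.mp ha
      exact Finset.mem_Ico.mpr (by omega)
    · intro b hb
      have := Finset.mem_Ico.mp hb
      exact Finset.mem_Ico.mpr (by omega)
    · intro a ha
      have := Finset.mem_Ico.mp ha
      omega
    · intro b hb
      have := Finset.mem_Ico.mp hb
      omega
    · intro a ha
      have hmem := Finset.mem_Ico.mp ha
      have hz : ((a : ℕ) : ZMod p) + (((p - a : ℕ)) : ZMod p) = 0 := by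
        rw [← Nat.cast_add, show a + (p - a) = p by omega, ZMod.natCast_self]
      have := eq_neg_of_add_eq_zero_left hz
      simpa using this
  rw [hre] at w
  have hneg : ∏ i ∈ Ico 1 (n+1), (-((i:ℕ) : ZMod p))
      = (-1)^n * ((n.factorial : ℕ) : ZMod p) := by
    have h1 : ∀ i ∈ Ico 1 (n+1), (-((i:ℕ) : ZMod p)) = (-1) * ((i:ℕ) : ZMod p) := by
      intro i _; ring
    rw [Finset.prod_congr rfl h1, Finset.prod_mul_distrib, Finset.prod_const,
      Nat.card_Ico, ← Nat.cast_prod, Finset.prod_Ico_id_eq_factorial]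
    norm_num
  rw [hneg, hn.neg_one_pow] at w
  have hfst : ∏ i ∈ Ico 1 (n+1), ((i:ℕ) : ZMod p) = ((n.factorial : ℕ) : ZMod p) := by
    rw [← Nat.cast_prod, Finset.prod_Ico_id_eq_factorial]
  rw [hfst] at w
  linear_combination -w

lemma fact_mul_fact [Fact p.Prime] (hpn : p = 2*n+1) (hn : Odd n) :
    ∀ j, j ≤ n → (((n+j).factorial : ℕ) : ZMod p) * (((n-j).factorial : ℕ) : ZMod p)
      = (-1)^j := by
  intro j
  induction j with
  | zero => intro _; simpa using nfact_sq hpn hn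
  | succ j ih =>
    intro hj
    have ihj := ih (by omega)
    have hnj : n - j = (n - (j+1)) + 1 := by omega
    have key : ((n + (j+1) : ℕ) : ZMod p) = -(((n - j : ℕ)) : ZMod p) := by
      have hz : ((n + (j+1) : ℕ) : ZMod p) + ((n - j : ℕ) : ZMod p) = 0 := by
        rw [← Nat.cast_add, show (n + (j+1)) + (n - j) = p by omega, ZMod.natCast_self]
      exact eq_neg_of_add_eq_zero_left hz
    have e1 : (n + (j+1)).factorial = (n + (j+1)) * (n + j).factorial := by
      rw [show n + (j+1) = (n+j) + 1 by omega, Nat.factorial_succ]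
    have e2 : (n - j).factorial = (n - j) * (n - (j+1)).factorial := by
      rw [hnj, Nat.factorial_succ, ← hnj]
    rw [e2, Nat.cast_mul] at ihj
    rw [e1, Nat.cast_mul, key, pow_succ]
    linear_combination -ihj

lemma fact_nz [Fact p.Prime] {m : ℕ} (hm : m < p) :
    ((m.factorial : ℕ) : ZMod p) ≠ 0 := by
  intro h
  rw [ZMod.natCast_eq_zero_iff] at h
  have := (Nat.Prime.dvd_factorial (Fact.out : p.Prime)).mp h
  omega

lemma choose_sym [Fact p.Prime] (hpn : p = 2*n+1) (hn : Odd n) {j : ℕ} (hj : j ≤ n) :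
    ((Nat.choose (n+j) n : ℕ) : ZMod p) + ((Nat.choose (2*n-j) n : ℕ) : ZMod p) = 0 := by
  have h1 : Nat.choose (n+j) n * n.factorial * j.factorial = (n+j).factorial := by
    have h := Nat.choose_mul_factorial_mul_factorial (show n ≤ n + j by omega)
    rwa [show n + j - n = j by omega] at h
  have h2 : Nat.choose (2*n-j) n * n.factorial * (n-j).factorial = (2*n-j).factorial := by
    have h := Nat.choose_mul_factorial_mul_factorial (show n ≤ 2*n - j by omega)
    rwa [show 2*n - j - n = n - j by omega] at h
  have E1 := fact_mul_fact hpn hn j hj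
  have E2 := fact_mul_fact hpn hn (n-j) (by omega)
  rw [show n + (n-j) = 2*n - j by omega, show n - (n-j) = j by omega] at E2
  have sign : ((-1 : ZMod p))^(n-j) = -((-1 : ZMod p)^j) := by
    have hs1 : ((-1:ZMod p))^(n-j) * (-1)^j = (-1)^n := by
      rw [← pow_add]; congr 1; omega
    rw [hn.neg_one_pow] at hs1
    have hsq : ((-1:ZMod p))^j * (-1)^j = 1 := by
      rw [← mul_pow]; norm_num
    calc ((-1 : ZMod p))^(n-j) = ((-1 : ZMod p))^(n-j) * (((-1:ZMod p))^j * (-1)^j) := by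
          rw [hsq, mul_one]
      _ = (((-1 : ZMod p))^(n-j) * ((-1:ZMod p))^j) * (-1)^j := by ring
      _ = -((-1 : ZMod p)^j) := by rw [hs1]; ring
  have ch1 : ((Nat.choose (n+j) n : ℕ) : ZMod p) * ((n.factorial : ℕ) : ZMod p)
      * ((j.factorial : ℕ) : ZMod p) = (((n+j).factorial : ℕ) : ZMod p) := by
    exact_mod_cast congrArg (Nat.cast : ℕ → ZMod p) h1
  have ch2 : ((Nat.choose (2*n-j) n : ℕ) : ZMod p) * ((n.factorial : ℕ) : ZMod p)
      * (((n-j).factorial : ℕ) : ZMod p) = (((2*n-j).factorial : ℕ) : ZMod p) := by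
    exact_mod_cast congrArg (Nat.cast : ℕ → ZMod p) h2
  have hu : ((n.factorial : ℕ) : ZMod p) * ((j.factorial : ℕ) : ZMod p)
      * (((n-j).factorial : ℕ) : ZMod p) ≠ 0 := by
    apply mul_ne_zero (mul_ne_zero ?_ ?_) ?_ <;> apply fact_nz <;> omega
  have expand : (((Nat.choose (n+j) n : ℕ) : ZMod p) + ((Nat.choose (2*n-j) n : ℕ) : ZMod p))
      * (((n.factorial : ℕ) : ZMod p) * ((j.factorial : ℕ) : ZMod p)
        * (((n-j).factorial : ℕ) : ZMod p)) = 0 := by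
    calc (((Nat.choose (n+j) n : ℕ) : ZMod p) + ((Nat.choose (2*n-j) n : ℕ) : ZMod p))
        * (((n.factorial : ℕ) : ZMod p) * ((j.factorial : ℕ) : ZMod p)
          * (((n-j).factorial : ℕ) : ZMod p))
        = (((Nat.choose (n+j) n : ℕ) : ZMod p) * ((n.factorial : ℕ) : ZMod p)
            * ((j.factorial : ℕ) : ZMod p)) * (((n-j).factorial : ℕ) : ZMod p)
          + (((Nat.choose (2*n-j) n : ℕ) : ZMod p) * ((n.factorial : ℕ) : ZMod p)
            * (((n-j).factorial : ℕ) : ZMod p)) * ((j.factorial : ℕ) : ZMod p) := by ring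
      _ = (((n+j).factorial : ℕ) : ZMod p) * (((n-j).factorial : ℕ) : ZMod p)
          + (((2*n-j).factorial : ℕ) : ZMod p) * ((j.factorial : ℕ) : ZMod p) := by
          rw [ch1, ch2]
      _ = (-1)^j + (-1)^(n-j) := by rw [E1, E2]
      _ = 0 := by rw [sign]; ring
  rcases mul_eq_zero.mp expand with h | h
  · exact h
  · exact absurd h hu

lemma Psum_congr [Fact p.Prime] {a b : ℕ} (h : a % (p-1) = b % (p-1)) :
    Psum p a = Psum p b := by
  classical
  rw [Psum, Psum]
  apply Finset.sum_congr rfl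
  intro x hx
  rw [Sfin, Finset.mem_filter] at hx
  exact pow_congr' hx.2.1 h

lemma Prel [Fact p.Prime] {t' : ℕ} (hcop : Nat.Coprime t' (p-1)) (hp3 : 2 < p)
    {g : ZMod p} (hg : g ≠ 0)
    (him : (fun x : ZMod p => x ^ t') '' ↑(Sfin p) = (fun s => g * s) '' ↑(Sfin p)) :
    ∀ k : ℕ, Psum p (t' * k) = g ^ k * Psum p k := by
  classical
  intro k
  obtain ⟨w, -, hw⟩ := Nat.exists_mul_mod_eq_one_of_coprime hcop (by omega)
  have hmod : (t' * w) % (p-1) = 1 % (p-1) := by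
    rw [hw, Nat.mod_eq_of_lt (by omega)]
  have hinj : ∀ x ∈ Sfin p, ∀ z ∈ Sfin p, x ^ t' = z ^ t' → x = z := by
    intro x hx z hz hxz
    rw [Sfin, Finset.mem_filter] at hx hz
    have hx0 := hx.2.1
    have hz0 := hz.2.1
    have h1 : x ^ (t'*w) = x := by rw [pow_congr' hx0 hmod, pow_one]
    have h2 : z ^ (t'*w) = z := by rw [pow_congr' hz0 hmod, pow_one]
    calc x = x ^ (t'*w) := h1.symm
      _ = (x ^ t')^w := by rw [pow_mul]
      _ = (z ^ t')^w := by rw [hxz]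
      _ = z ^ (t'*w) := by rw [pow_mul]
      _ = z := h2
  have hfin : (Sfin p).image (fun x => x ^ t') = (Sfin p).image (fun s => g * s) :=
    Finset.coe_injective (by rw [Finset.coe_image, Finset.coe_image]; exact him)
  have lhs : ∑ y ∈ (Sfin p).image (fun x => x ^ t'), y ^ k = Psum p (t' * k) := by
    rw [Finset.sum_image hinj, Psum]
    exact Finset.sum_congr rfl fun x _ => by rw [← pow_mul]
  have rhs : ∑ y ∈ (Sfin p).image (fun s => g * s), y ^ k = g ^ k * Psum p k := by
    rw [Finset.sum_image (fun x _ z _ h => mul_left_cancel₀ hg h), Psum, Finset.mul_sum]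
    exact Finset.sum_congr rfl fun x _ => by rw [mul_pow]
  rw [← lhs, hfin, rhs]


lemma exists_k0 {t' n : ℕ} (h3 : 3 ≤ t') (hle : t' + 2 ≤ n) :
    ∃ k0, 1 ≤ k0 ∧ k0 ≤ n - 1 ∧ n + 1 ≤ t' * k0 ∧ t' * k0 ≤ 2*n - 2 := by
  classical
  have hex : ∃ k, n < t' * k := by
    refine ⟨n+1, ?_⟩
    have h := Nat.mul_le_mul_right (k := n+1) h3
    omega
  let k0 := Nat.find hex
  have hk0 : n < t' * k0 := Nat.find_spec hex
  have hk01 : 1 ≤ k0 := by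
    rcases Nat.eq_zero_or_pos k0 with h0 | h1
    · exfalso; rw [h0, Nat.mul_zero] at hk0; omega
    · exact h1
  have hprev : ¬ (n < t' * (k0 - 1)) := Nat.find_min hex (by omega)
  have he : t' * k0 = t' * (k0 - 1) + t' := by
    have h1 : k0 - 1 + 1 = k0 := by omega
    calc t' * k0 = t' * ((k0 - 1) + 1) := by rw [h1]
      _ = t' * (k0 - 1) + t' := by ring
  have hub : t' * k0 ≤ 2*n - 2 := by omega
  have h3k : 3 * k0 ≤ t' * k0 := Nat.mul_le_mul_right (k := k0) h3
  exact ⟨k0, hk01, by omega, by omega, hub⟩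

end SLCE9

open SLCE9 in
/-- For a prime `p ≡ 3 (mod 4)`, the multiplier group of the SLCE
almost difference set over `𝔽_p^*` is trivial. -/
theorem slce_multiplier_group_trivial_three_mod_four
    (p : ℕ) (hp : p.Prime) (hp4 : p % 4 = 3)
    (S : Set (ZMod p)) (hS : S = {x : ZMod p | x ≠ 0 ∧ ¬ IsSquare (x + 1)})
    (t : (ZMod (p - 1))ˣ)
    (ht : ∃ g : ZMod p, g ≠ 0 ∧
      (fun x : ZMod p => x ^ ((t : ZMod (p - 1)).val)) '' S = (fun s => g * s) '' S) :
    t = 1 := by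
  by_cases hp3 : p = 3
  · subst hp3
    exact (by decide : ∀ u : (ZMod (3-1))ˣ, u = 1) t
  · haveI : Fact p.Prime := ⟨hp⟩
    have hple : 2 ≤ p := hp.two_le
    have hp7 : 7 ≤ p := by
      have h5 : p ≠ 5 := by rintro rfl; omega
      omega
    set n : ℕ := (p-1)/2 with hn_def
    have hpn : p = 2*n+1 := by omega
    have hnodd : n % 2 = 1 := by omega
    have hn : Odd n := Nat.odd_iff.mpr hnodd
    have hn3 : 3 ≤ n := by omega
    have hn1 : 1 ≤ n := by omega
    haveI : NeZero (p-1) := ⟨by omega⟩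
    obtain ⟨g, hg0, him⟩ := ht
    have hSco : {x : ZMod p | x ≠ 0 ∧ ¬ IsSquare (x + 1)} = (↑(Sfin p) : Set (ZMod p)) := by
      classical
      ext x
      simp [Sfin]
    rw [hS, hSco] at him
    set t' : ℕ := ((t : ZMod (p - 1)).val) with ht'def
    have hcop : Nat.Coprime t' (p-1) := ZMod.val_coe_unit_coprime t
    have hcop' : Nat.gcd t' (p-1) = 1 := hcop
    have htlt : t' < p - 1 := ZMod.val_lt _
    have ht0 : t' ≠ 0 := by
      intro h
      rw [h] at hcop'
      simp [Nat.gcd_zero_left] at hcop'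
      omega
    have htodd : t' % 2 = 1 := by
      rcases Nat.even_or_odd t' with he | ho
      · exfalso
        have h2 : (2:ℕ) ∣ t' := he.two_dvd
        have h2' : (2:ℕ) ∣ (p-1) := ⟨n, by omega⟩
        have hd12 : (2:ℕ) ∣ 1 := hcop' ▸ Nat.dvd_gcd h2 h2'
        omega
      · exact Nat.odd_iff.mp ho
    have htn : t' ≠ n := by
      intro h
      rw [h] at hcop'
      have hd : n ∣ Nat.gcd n (p-1) := Nat.dvd_gcd dvd_rfl ⟨2, by omega⟩
      rw [hcop'] at hd
      have := Nat.le_of_dvd one_pos hd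
      omega
    have h2z : (2 : ZMod p) ≠ 0 := two_nz hpn hn1
    have hinv2 : (2⁻¹ : ZMod p) ≠ 0 := inv_ne_zero h2z
    have PR : ∀ k : ℕ, Psum p (t' * k) = g ^ k * Psum p k :=
      Prel hcop (by omega) hg0 him
    -- Step A : g ^ n = 1
    have hmodn : (t' * n) % (p - 1) = n % (p - 1) := by
      obtain ⟨a, ha⟩ : ∃ a, t' = 2*a + 1 := ⟨t'/2, by omega⟩
      have he : t' * n = a * (p-1) + n := by
        rw [ha, show p - 1 = 2*n by omega]; ring
      rw [he, Nat.add_comm, Nat.add_mul_mod_self_right]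
    have hPn : Psum p n = 1 := by
      rw [Pval hpn hn hn1 (by omega) (by omega), Nat.choose_self, Nat.cast_one]
      have hev : ((-1 : ZMod p))^(n+1) = 1 := Even.neg_one_pow (by
        rw [Nat.even_iff]; omega)
      rw [hev, one_mul]
      rw [show (1 + 1 : ZMod p) = 2 by norm_num, mul_inv_cancel₀ h2z]
    have hgn : g ^ n = 1 := by
      have h := PR n
      rw [Psum_congr hmodn, hPn, mul_one] at h
      exact h.symm
    -- Step B : g = 1
    have hP1 : Psum p 1 = 2⁻¹ := by
      rw [Pval hpn hn hn1 le_rfl (by omega), Nat.choose_eq_zero_of_lt (by omega), Nat.cast_zero]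
      norm_num
    have hPt : Psum p t' = g * 2⁻¹ := by
      have h := PR 1
      rwa [mul_one, pow_one, hP1] at h
    have hgC : 1 + (Nat.choose t' n : ZMod p) = g := by
      have hsgn : ((-1:ZMod p))^(t'+1) = 1 := Even.neg_one_pow (by rw [Nat.even_iff]; omega)
      have h2 : Psum p t' = (1 + (Nat.choose t' n : ZMod p)) * 2⁻¹ := by
        rw [Pval hpn hn hn1 (by omega) (by omega), hsgn, one_mul]
      rw [hPt] at h2
      exact mul_right_cancel₀ hinv2 h2.symm
    have hPn1 : Psum p (n-1) = -(2⁻¹ : ZMod p) := by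
      rw [Pval hpn hn hn1 (by omega) (by omega), Nat.choose_eq_zero_of_lt (by omega),
        Nat.cast_zero, show n - 1 + 1 = n by omega, hn.neg_one_pow]
      ring
    have hmodgen : ∀ m : ℕ, (m + t') % (p-1) = n % (p-1) →
        (t' * (n-1)) % (p-1) = m % (p-1) := by
      intro m hm
      have e1 : t' * (n-1) + t' = t' * n := by
        have hnn : n - 1 + 1 = n := by omega
        calc t'*(n-1) + t' = t'*((n-1)+1) := by ring
          _ = t'*n := by rw [hnn]
      have key : (t' * (n-1) + t') % (p-1) = (m + t') % (p-1) := by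
        rw [e1, hmodn, hm]
      exact Nat.ModEq.add_right_cancel' t' key
    have hlt : t' < n := by
      by_contra hge
      have hgt : n < t' := by omega
      have hmod2 := hmodgen (3*n - t') (by
        rw [show 3*n - t' + t' = 3*n by omega, show 3*n = n + (p-1) by omega,
          Nat.add_mod_right])
      have hPm2 : Psum p (3*n - t') = -((1 + (Nat.choose (3*n - t') n : ZMod p)) * 2⁻¹) := by
        rw [Pval hpn hn hn1 (by omega) (by omega)]
        have hodd : ((-1:ZMod p))^((3*n - t')+1) = -1 := Odd.neg_one_pow (by
          rw [Nat.odd_iff]; omega)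
        rw [hodd]; ring
      have h := PR (n-1)
      rw [Psum_congr hmod2, hPm2, hPn1] at h
      have hC2 : (1 + (Nat.choose (3*n - t') n : ZMod p)) = g^(n-1) := by
        apply mul_right_cancel₀ hinv2
        linear_combination -h
      have hcs := choose_sym hpn hn (j := 2*n - t') (by omega)
      rw [show n + (2*n - t') = 3*n - t' by omega, show 2*n - (2*n - t') = t' by omega] at hcs
      have hsum : g + g^(n-1) = 2 := by linear_combination (-1 : ZMod p)*hgC - hC2 + hcs
      have hprod : g * g^(n-1) = 1 := by
        have hx : g^n = g * g^(n-1) := by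
          conv_lhs => rw [show n = (n-1)+1 by omega]
          rw [pow_succ]; ring
        rw [← hx]; exact hgn
      have hg1 : g = 1 := by
        have hx : (g - 1)^2 = 0 := by linear_combination g*hsum - hprod
        have := pow_eq_zero_iff (n := 2) (by norm_num) |>.mp hx
        exact eq_of_sub_eq_zero this
      rw [hg1] at hgC
      have hCt : (Nat.choose t' n : ZMod p) = 0 := by linear_combination hgC
      rw [ZMod.natCast_eq_zero_iff] at hCt
      have hfact : Nat.choose t' n * n.factorial * (t'-n).factorial = t'.factorial :=
        Nat.choose_mul_factorial_mul_factorial (by omega)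
      have hdvd : p ∣ t'.factorial := by
        rw [← hfact]
        exact Dvd.dvd.mul_right (Dvd.dvd.mul_right hCt _) _
      have := (Nat.Prime.dvd_factorial hp).mp hdvd
      omega
    -- now t' < n : derive g = 1
    have hmod2 := hmodgen (n - t') (by rw [show n - t' + t' = n by omega])
    have hPm2 : Psum p (n - t') = -(2⁻¹ : ZMod p) := by
      rw [Pval hpn hn hn1 (by omega) (by omega), Nat.choose_eq_zero_of_lt (by omega),
        Nat.cast_zero]
      have hodd : ((-1:ZMod p))^((n - t')+1) = -1 := Odd.neg_one_pow (by
        rw [Nat.odd_iff]; omega)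
      rw [hodd]; ring
    have hgn1 : g^(n-1) = 1 := by
      have h := PR (n-1)
      rw [Psum_congr hmod2, hPm2, hPn1] at h
      apply mul_right_cancel₀ (neg_ne_zero.mpr hinv2)
      linear_combination -h
    have hg1 : g = 1 := by
      have hx : g ^ n = g * g^(n-1) := by
        conv_lhs => rw [show n = (n-1)+1 by omega]
        rw [pow_succ]; ring
      rw [hx, hgn1, mul_one] at hgn
      exact hgn
    -- endgame
    by_cases ht1 : t' = 1
    · haveI : Fact (1 < p - 1) := ⟨by omega⟩
      have hveq : ((t : ZMod (p - 1)) : ZMod (p-1)).val = (1 : ZMod (p-1)).val := by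
        rw [ZMod.val_one]
        exact ht1
      exact Units.ext (ZMod.val_injective (p-1) hveq)
    · exfalso
      have ht3 : 3 ≤ t' := by omega
      have ht'le : t' + 2 ≤ n := by omega
      obtain ⟨k0, hk01, hk0b, hm1a, hm1b⟩ := exists_k0 ht3 ht'le
      have h := PR k0
      rw [hg1, one_pow, one_mul] at h
      have hL := Pval (p := p) hpn hn hn1 (k := t' * k0) (by omega) (by omega)
      have hR := Pval (p := p) hpn hn hn1 (k := k0) (by omega) (by omega)
      rw [Nat.choose_eq_zero_of_lt (by omega), Nat.cast_zero] at hR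
      rw [hL, hR] at h
      have hparn : (t' * k0) % 2 = k0 % 2 := by
        rw [Nat.mul_mod, htodd, one_mul, Nat.mod_mod_of_dvd _ dvd_rfl]
      have hsgn : ((-1:ZMod p))^(t' * k0 + 1) = ((-1:ZMod p))^(k0 + 1) := by
        rcases Nat.even_or_odd k0 with he | ho
        · rw [Nat.even_iff] at he
          have h1 : Odd (t' * k0 + 1) := by rw [Nat.odd_iff]; omega
          have h2 : Odd (k0 + 1) := by rw [Nat.odd_iff]; omega
          rw [h1.neg_one_pow, h2.neg_one_pow]
        · rw [Nat.odd_iff] at ho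
          have h1 : Even (t' * k0 + 1) := by rw [Nat.even_iff]; omega
          have h2 : Even (k0 + 1) := by rw [Nat.even_iff]; omega
          rw [h1.neg_one_pow, h2.neg_one_pow]
      rw [hsgn] at h
      have ha : ((-1:ZMod p))^(k0 + 1) ≠ 0 :=
        pow_ne_zero _ (neg_ne_zero.mpr one_ne_zero)
      have e1 : (1 + (Nat.choose (t' * k0) n : ZMod p)) = (1 + 0 : ZMod p) := by
        apply mul_left_cancel₀ ha
        apply mul_right_cancel₀ hinv2
        linear_combination h
      have hCm1 : (Nat.choose (t' * k0) n : ZMod p) = 0 := by linear_combination e1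
      rw [ZMod.natCast_eq_zero_iff] at hCm1
      have hfact : Nat.choose (t' * k0) n * n.factorial * ((t' * k0) - n).factorial
          = (t' * k0).factorial := Nat.choose_mul_factorial_mul_factorial (by omega)
      have hdvd : p ∣ (t' * k0).factorial := by
        rw [← hfact]
        exact Dvd.dvd.mul_right (Dvd.dvd.mul_right hCm1 _) _
      have := (Nat.Prime.dvd_factorial hp).mp hdvd
      omega
end

section
/- Let p be a prime with p ≡ 1 (mod 8) and p > 197 (= 14² + 1), and let S be the SLCE almost difference set over 𝔽_p^*. Then the multiplier group of S is trivial: every unit t of ℤ/(p-1)ℤ that is a multiplier of S equals 1. -/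
open Finset

namespace SlceAux

lemma cast_inj_of_lt {M a b : ℕ} (ha : a < M) (hb : b < M)
    (h : (a : ZMod M) = (b : ZMod M)) : a = b := by
  haveI : NeZero M := ⟨by omega⟩
  have := congrArg ZMod.val h
  rwa [ZMod.val_cast_of_lt ha, ZMod.val_cast_of_lt hb] at this

lemma inter_card_bound {α : Type*} [DecidableEq α] {A B U : Finset α}
    (hA : A ⊆ U) (hB : B ⊆ U) : A.card + B.card ≤ (A ∩ B).card + U.card := by
  have h1 := Finset.card_union_add_card_inter A B
  have h2 : (A ∪ B).card ≤ U.card := Finset.card_le_card (Finset.union_subset hA hB)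
  omega

lemma multiples_card_le {a b d : ℕ} (hd : 0 < d) :
    ((Finset.Ico a b).filter (fun x => d ∣ x)).card ≤ ((b - 1) / d + 1) - a / d := by
  have hsub : ((Finset.Ico a b).filter (fun x => d ∣ x)).card
      ≤ (Finset.Ico (a / d) ((b - 1) / d + 1)).card := by
    apply Finset.card_le_card_of_injOn (fun x => x / d)
    · intro x hx
      simp only [Finset.mem_coe, Finset.mem_filter, Finset.mem_Ico] at hx ⊢
      refine ⟨Nat.div_le_div_right (by omega), ?_⟩
      have : x / d ≤ (b - 1) / d := Nat.div_le_div_right (by omega)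
      omega
    · intro x hx y hy hxy
      simp only [Finset.coe_filter, Finset.mem_Ico, Set.mem_setOf_eq] at hx hy
      obtain ⟨-, c, rfl⟩ := hx
      obtain ⟨-, e, rfl⟩ := hy
      simp only [Nat.mul_div_cancel_left _ hd] at hxy
      rw [hxy]
  rwa [Nat.card_Ico] at hsub

lemma pow_eq_pow_of_mod_eq {K : Type*} [Monoid K] {a : K} {n j j' : ℕ}
    (han : a ^ n = 1) (hmod : j % n = j' % n) : a ^ j = a ^ j' := by
  have key : ∀ m : ℕ, a ^ m = a ^ (m % n) := by
    intro m
    conv_lhs => rw [← Nat.div_add_mod m n]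
    rw [pow_add, pow_mul, han, one_pow, one_mul]
  rw [key j, key j', hmod]

end SlceAux

set_option maxHeartbeats 2000000 in
/-- For a prime `p ≡ 1 (mod 8)` with `p > 197`, the multiplier group
of the SLCE almost difference set over `𝔽_p^*` is trivial. -/
theorem slce_multiplier_group_trivial_one_mod_eight
    (p : ℕ) (hp : p.Prime) (hp8 : p % 8 = 1) (hbig : 197 < p)
    (S : Set (ZMod p)) (hS : S = {x : ZMod p | x ≠ 0 ∧ ¬ IsSquare (x + 1)})
    (t : (ZMod (p - 1))ˣ)
    (ht : ∃ g : ZMod p, g ≠ 0 ∧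
      (fun x : ZMod p => x ^ ((t : ZMod (p - 1)).val)) '' S = (fun s => g * s) '' S) :
    t = 1 := by
  haveI hfact : Fact p.Prime := ⟨hp⟩
  obtain ⟨g, hg0, himg⟩ := ht
  -- basic numerology
  set N : ℕ := p / 2 with hNdef
  have hpodd : p % 2 = 1 := by omega
  have hpN : p = 2 * N + 1 := by omega
  have hM2N : p - 1 = 2 * N := by omega
  have hN100 : 100 ≤ N := by omega
  have hNeven : N % 2 = 0 := by omega
  haveI : NeZero (p - 1) := ⟨by omega⟩
  -- the exponent and its inverse
  set k : ℕ := ((t : ZMod (p - 1))).val with hkdef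
  set kb : ℕ := (((t⁻¹ : (ZMod (p - 1))ˣ) : ZMod (p - 1))).val with hkbdef
  have hkcop : Nat.Coprime k (p - 1) := ZMod.val_coe_unit_coprime t
  have hkbcop : Nat.Coprime kb (p - 1) := ZMod.val_coe_unit_coprime t⁻¹
  have hklt : k < p - 1 := ZMod.val_lt _
  have hkblt : kb < p - 1 := ZMod.val_lt _
  have hkodd : k % 2 = 1 := by
    rcases Nat.even_or_odd k with he | ho
    · exfalso
      have h2 : 2 ∣ Nat.gcd k (p - 1) :=
        Nat.dvd_gcd he.two_dvd (by omega)
      rw [Nat.Coprime] at hkcop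
      omega
    · exact Nat.odd_iff.mp ho
  have hkbodd : kb % 2 = 1 := by
    rcases Nat.even_or_odd kb with he | ho
    · exfalso
      have h2 : 2 ∣ Nat.gcd kb (p - 1) :=
        Nat.dvd_gcd he.two_dvd (by omega)
      rw [Nat.Coprime] at hkbcop
      omega
    · exact Nat.odd_iff.mp ho
  have hkcast : ((k : ℕ) : ZMod (p - 1)) = (t : ZMod (p - 1)) := by
    rw [hkdef, ZMod.natCast_val, ZMod.cast_id]
  have hkbcast : ((kb : ℕ) : ZMod (p - 1)) = ((t⁻¹ : (ZMod (p - 1))ˣ) : ZMod (p - 1)) := by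
    rw [hkbdef, ZMod.natCast_val, ZMod.cast_id]
  -- injectivity of the power map
  have powinj : ∀ x y : ZMod p, x ≠ 0 → y ≠ 0 → x ^ k = y ^ k → x = y := by
    intro x y hx hy hxy
    have hyk : y ^ k ≠ 0 := pow_ne_zero _ hy
    have hc : (x * y⁻¹) ^ k = 1 := by
      rw [mul_pow, inv_pow, hxy, mul_inv_cancel₀ hyk]
    have hcM : (x * y⁻¹) ^ (p - 1) = 1 :=
      ZMod.pow_card_sub_one_eq_one (by
        exact mul_ne_zero hx (inv_ne_zero hy))
    have h1 : orderOf (x * y⁻¹) ∣ Nat.gcd k (p - 1) :=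
      Nat.dvd_gcd (orderOf_dvd_of_pow_eq_one hc) (orderOf_dvd_of_pow_eq_one hcM)
    rw [Nat.Coprime] at hkcop
    rw [hkcop] at h1
    have : x * y⁻¹ = 1 := orderOf_eq_one_iff.mp (Nat.eq_one_of_dvd_one h1 ▸ rfl)
    field_simp at this
    exact this
  -- membership criterion
  have hSmem : ∀ x : ZMod p, x ∈ S ↔ (x ≠ 0 ∧ ¬ IsSquare (x + 1)) := by
    intro x; rw [hS]; rfl
  set h : ZMod p := g⁻¹ with hhdef
  have hh0 : h ≠ 0 := inv_ne_zero hg0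
  -- pointwise transport
  have key1 : ∀ x : ZMod p, x ≠ 0 → (x ∈ S ↔ h * x ^ k ∈ S) := by
    intro x hx
    constructor
    · intro hxS
      have : x ^ k ∈ (fun x : ZMod p => x ^ k) '' S := ⟨x, hxS, rfl⟩
      rw [himg] at this
      obtain ⟨s, hsS, hgs⟩ := this
      have : s = h * x ^ k := by
        rw [hhdef]
        field_simp
        rw [mul_comm]
        exact hgs
      rwa [this] at hsS
    · intro hsS
      have hmem : x ^ k ∈ (fun s : ZMod p => g * s) '' S := by
        refine ⟨h * x ^ k, hsS, ?_⟩
        rw [hhdef]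
        field_simp
      rw [← himg] at hmem
      obtain ⟨y, hyS, hyk⟩ := hmem
      have hy0 : y ≠ 0 := ((hSmem y).mp hyS).1
      have : y = x := powinj y x hy0 hx hyk
      rwa [this] at hyS
  have key : ∀ x : ZMod p, x ≠ 0 → (¬ IsSquare (x + 1) ↔ ¬ IsSquare (h * x ^ k + 1)) := by
    intro x hx
    have hhx : h * x ^ k ≠ 0 := mul_ne_zero hh0 (pow_ne_zero _ hx)
    have := key1 x hx
    rw [hSmem, hSmem] at this
    constructor
    · intro h1
      exact (this.mp ⟨hx, h1⟩).2
    · intro h1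
      exact (this.mpr ⟨hhx, h1⟩).2
  -- Euler facts
  have htwo : (2 : ZMod p) ≠ 0 := by
    intro h2
    have := (ZMod.natCast_eq_zero_iff 2 p).mp (by exact_mod_cast h2)
    have := Nat.le_of_dvd (by norm_num) this
    omega
  have hone_ne : (1 : ZMod p) ≠ -1 := by
    intro h1
    apply htwo
    linear_combination h1
  have hsign : ∀ z : ZMod p, z ≠ 0 → z ^ N = 1 ∨ z ^ N = -1 := by
    intro z hz
    have h2 : z ^ N * z ^ N = 1 := by
      rw [← pow_add]
      have : N + N = p - 1 := by omega
      rw [this]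
      exact ZMod.pow_card_sub_one_eq_one hz
    rcases mul_self_eq_one_iff.mp h2 with h | h
    · exact Or.inl h
    · exact Or.inr h
  have hsq : ∀ z : ZMod p, z ≠ 0 → (IsSquare z ↔ z ^ N = 1) := by
    intro z hz
    exact ZMod.euler_criterion p hz
  have hNne : N ≠ 0 := by omega
  -- the special point x0
  set x0 : ZMod p := (-h⁻¹) ^ kb with hx0def
  have hmh : (-h⁻¹ : ZMod p) ≠ 0 := neg_ne_zero.mpr (inv_ne_zero hh0)
  have hx00 : x0 ≠ 0 := pow_ne_zero _ hmh
  have hx0k : x0 ^ k = -h⁻¹ := by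
    rw [hx0def, ← pow_mul]
    have hdvd : (p - 1) ∣ (kb * k - 1) := by
      have : ((kb * k - 1 : ℕ) : ZMod (p - 1)) = 0 := by
        have hmul : ((kb * k : ℕ) : ZMod (p - 1)) = 1 := by
          push_cast
          rw [hkcast, hkbcast]
          rw [← Units.val_mul, inv_mul_cancel]
          rfl
        have hge : 1 ≤ kb * k := by
          rcases Nat.eq_zero_or_pos (kb * k) with h0 | h1
          · exfalso
            rcases Nat.mul_eq_zero.mp h0 with h | h
            · rw [h] at hkbcop
              have := hkbcop
              simp [Nat.Coprime] at this
              omega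
            · rw [h] at hkcop
              have := hkcop
              simp [Nat.Coprime] at this
              omega
          · exact h1
        have : ((kb * k - 1 : ℕ) : ZMod (p - 1)) = ((kb * k : ℕ) : ZMod (p - 1)) - 1 := by
          rw [Nat.cast_sub hge, Nat.cast_one]
        rw [this, hmul]
        ring
      exact (ZMod.natCast_eq_zero_iff _ _).mp this
    obtain ⟨c, hc⟩ := hdvd
    have hge : 1 ≤ kb * k := by
      by_contra hcon
      push_neg at hcon
      interval_cases h : (kb * k)
      · rcases Nat.mul_eq_zero.mp h with h' | h' <;>
        · first
          | (rw [h'] at hkbcop; simp [Nat.Coprime] at hkbcop; omega)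
          | (rw [h'] at hkcop; simp [Nat.Coprime] at hkcop; omega)
    have : kb * k = (p - 1) * c + 1 := by omega
    rw [this, pow_add, pow_mul, ZMod.pow_card_sub_one_eq_one hmh, one_pow, one_mul, pow_one]
  have hx0unique : ∀ x : ZMod p, x ≠ 0 → h * x ^ k + 1 = 0 → x = x0 := by
    intro x hx hx1
    apply powinj x x0 hx hx00
    rw [hx0k]
    have h1 : h * x ^ k = -1 := by linear_combination hx1
    have h2 := congrArg (fun z => h⁻¹ * z) h1
    simp only [← mul_assoc, inv_mul_cancel₀ hh0, one_mul, mul_neg, mul_one] at h2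
    exact h2
  have hx0neg1 : x0 = -1 ↔ h = 1 := by
    constructor
    · intro hx0
      have : x0 ^ k = -1 := by
        rw [hx0]
        exact Odd.neg_one_pow (Nat.odd_iff.mpr hkodd)
      rw [hx0k] at this
      have : h⁻¹ = 1 := by linear_combination -this
      rwa [inv_eq_one] at this
    · intro hh1
      rw [hx0def, hh1, inv_one]
      exact Odd.neg_one_pow (Nat.odd_iff.mpr hkbodd)
  -- pointwise sign identity
  have signid : ∀ x : ZMod p, x ≠ 0 →
      (1 + x) ^ N - (1 + h * x ^ k) ^ N
        = (-(1 - h) ^ N) * (if x = -1 then 1 else 0)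
          + ((1 + x0) ^ N) * (if x = x0 then 1 else 0) := by
    intro x hx
    by_cases hx1 : x = -1
    · subst hx1
      have hk1 : (-1 : ZMod p) ^ k = -1 := Odd.neg_one_pow (Nat.odd_iff.mpr hkodd)
      rw [hk1]
      have hz : (1 : ZMod p) + -1 = 0 := by ring
      rw [hz, zero_pow hNne]
      by_cases hx0m : x0 = -1
      · have hh1 : h = 1 := hx0neg1.mp hx0m
        rw [if_pos rfl, if_pos hx0m.symm, hh1]
        have : (1 : ZMod p) - 1 = 0 := by ring
        rw [this, zero_pow hNne]
        have : (1 : ZMod p) + x0 = 0 := by rw [hx0m]; ring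
        rw [this, zero_pow hNne]
        ring_nf
        simp [hNne]
      · rw [if_pos rfl, if_neg (fun hh => hx0m hh.symm)]
        have : (1 : ZMod p) + h * -1 = 1 - h := by ring
        rw [this]
        ring
    · by_cases hxx0 : x = x0
      · subst hxx0
        have hne1 : x0 ≠ -1 := hx1
        have : h * x0 ^ k = -1 := by
          rw [hx0k]
          field_simp
        rw [this]
        have hz : (1 : ZMod p) + -1 = 0 := by ring
        rw [hz, zero_pow hNne]
        rw [if_neg hx1, if_pos rfl]
        ring
      · -- generic point
        have h1x : (1 : ZMod p) + x ≠ 0 := by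
          intro hz
          apply hx1
          linear_combination hz
        have h1hx : (1 : ZMod p) + h * x ^ k ≠ 0 := by
          intro hz
          apply hxx0
          exact hx0unique x hx (by linear_combination hz)
        have hiff : (1 + x) ^ N = 1 ↔ (1 + h * x ^ k) ^ N = 1 := by
          have e1 : IsSquare (x + 1) ↔ (1 + x) ^ N = 1 := by
            rw [add_comm]
            exact hsq _ h1x
          have e2 : IsSquare (h * x ^ k + 1) ↔ (1 + h * x ^ k) ^ N = 1 := by
            rw [add_comm]
            exact hsq _ h1hx
          rw [← e1, ← e2]
          have := key x hx
          tauto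
        rw [if_neg hx1, if_neg hxx0]
        rcases hsign _ h1x with hs1 | hs1
        · rw [hs1, hiff.mp hs1]
          ring
        · rcases hsign _ h1hx with hs2 | hs2
          · exfalso
            have := hiff.mpr hs2
            rw [this] at hs1
            exact hone_ne hs1
          · rw [hs1, hs2]
            ring
  -- setup for coefficient extraction
  set u : ZMod p := x0⁻¹ with hudef
  have hu0 : u ≠ 0 := inv_ne_zero hx00
  set ψ : ℕ → ℕ := fun j => (kb * j) % (p - 1) with hψdef
  have hψlt : ∀ j, ψ j < p - 1 := fun j => Nat.mod_lt _ (by omega)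
  have hψcast : ∀ j : ℕ, ((ψ j : ℕ) : ZMod (p - 1))
      = ((t⁻¹ : (ZMod (p - 1))ˣ) : ZMod (p - 1)) * (j : ZMod (p - 1)) := by
    intro j
    rw [hψdef]
    simp only [ZMod.natCast_mod, Nat.cast_mul]
    rw [hkbcast]
  have hq : Fintype.card (ZMod p) = p := ZMod.card p
  have hSU : ∀ m : ℕ, (∑ x : (ZMod p)ˣ, ((x : ZMod p)) ^ m)
      = if (p - 1) ∣ m then (-1 : ZMod p) else 0 := by
    intro m
    classical
    have := FiniteField.sum_pow_units (ZMod p) m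
    rwa [hq] at this
  have master : ∀ j : ℕ, j < p - 1 →
      ((if j ≤ N then ((N.choose j : ZMod p)) else 0)
        - (if ψ j ≤ N then ((N.choose (ψ j) : ZMod p)) * h ^ (ψ j) else 0))
      = (1 - h) ^ N * (-1 : ZMod p) ^ j - (1 + x0) ^ N * u ^ j := by
    intro j hj
    set r : ℕ := (p - 1 - j) % (p - 1) with hrdef
    have hrj : (p - 1) ∣ (r + j) := by
      rcases Nat.eq_zero_or_pos j with h0 | h1
      · have hr0 : r = 0 := by rw [hrdef, h0, Nat.sub_zero, Nat.mod_self]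
        rw [hr0, h0]
        exact dvd_zero _
      · have : r = p - 1 - j := by rw [hrdef]; exact Nat.mod_eq_of_lt (by omega)
        exact ⟨1, by omega⟩
    have hrcast : ((r : ℕ) : ZMod (p - 1)) = -(j : ZMod (p - 1)) := by
      have hz : ((r + j : ℕ) : ZMod (p - 1)) = 0 :=
        (ZMod.natCast_eq_zero_iff _ _).mpr hrj
      push_cast at hz
      linear_combination hz
    have hdvd1 : ∀ i : ℕ, i ≤ N → ((p - 1) ∣ (i + r) ↔ i = j) := by
      intro i hi
      rw [← ZMod.natCast_eq_zero_iff]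
      push_cast
      rw [hrcast]
      constructor
      · intro hz
        have : (i : ZMod (p - 1)) = (j : ZMod (p - 1)) := by linear_combination hz
        exact SlceAux.cast_inj_of_lt (by omega) hj this
      · intro hij; subst hij; ring
    have hdvd2 : ∀ i : ℕ, i ≤ N → ((p - 1) ∣ (k * i + r) ↔ i = ψ j) := by
      intro i hi
      rw [← ZMod.natCast_eq_zero_iff]
      push_cast
      rw [hrcast, hkcast]
      constructor
      · intro hz
        have h1 : (t : ZMod (p - 1)) * (i : ZMod (p - 1)) = (j : ZMod (p - 1)) := by
          linear_combination hz
        have h2 : (i : ZMod (p - 1)) = ((t⁻¹ : (ZMod (p - 1))ˣ) : ZMod (p - 1)) * (j : ZMod (p - 1)) :=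
          (Units.eq_inv_mul_iff_mul_eq t).mpr h1
        rw [← hψcast j] at h2
        exact SlceAux.cast_inj_of_lt (by omega) (hψlt j) h2
      · intro hij
        subst hij
        rw [hψcast j]
        have hcancel : (t : ZMod (p - 1)) * (((t⁻¹ : (ZMod (p - 1))ˣ) : ZMod (p - 1)) * (j : ZMod (p - 1)))
            = (j : ZMod (p - 1)) := by
          rw [← mul_assoc, ← Units.val_mul, mul_inv_cancel, Units.val_one, one_mul]
        linear_combination hcancel
    -- T1
    have hT1 : (∑ x : (ZMod p)ˣ, (1 + (x : ZMod p)) ^ N * (x : ZMod p) ^ r)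
        = if j ≤ N then -(N.choose j : ZMod p) else 0 := by
      have hexp : ∀ x : (ZMod p)ˣ, (1 + (x : ZMod p)) ^ N * (x : ZMod p) ^ r
          = ∑ i ∈ range (N + 1), (N.choose i : ZMod p) * (x : ZMod p) ^ (i + r) := by
        intro x
        rw [add_comm (1 : ZMod p) _, add_pow, Finset.sum_mul]
        apply Finset.sum_congr rfl
        intro i _
        rw [one_pow, mul_one, pow_add]
        ring
      rw [Finset.sum_congr rfl (fun x _ => hexp x), Finset.sum_comm]
      have hinner : ∀ i ∈ range (N + 1),
          (∑ x : (ZMod p)ˣ, (N.choose i : ZMod p) * (x : ZMod p) ^ (i + r))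
          = (N.choose i : ZMod p) * (if (p - 1) ∣ (i + r) then (-1 : ZMod p) else 0) := by
        intro i _
        rw [← Finset.mul_sum, hSU]
      rw [Finset.sum_congr rfl hinner]
      by_cases hjN : j ≤ N
      · rw [if_pos hjN]
        have hzero : ∀ i ∈ range (N + 1), i ≠ j →
            (N.choose i : ZMod p) * (if (p - 1) ∣ (i + r) then (-1 : ZMod p) else 0) = 0 := by
          intro i hi hij
          rw [if_neg (fun hd => hij ((hdvd1 i (Nat.lt_succ_iff.mp (Finset.mem_range.mp hi))).mp hd)),
            mul_zero]
        rw [Finset.sum_eq_single_of_mem j (Finset.mem_range.mpr (by omega)) hzero,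
          if_pos ((hdvd1 j hjN).mpr rfl)]
        ring
      · rw [if_neg hjN]
        apply Finset.sum_eq_zero
        intro i hi
        have hiN : i ≤ N := Nat.lt_succ_iff.mp (Finset.mem_range.mp hi)
        rw [if_neg (fun hd => hjN (((hdvd1 i hiN).mp hd) ▸ hiN)), mul_zero]
    -- T2
    have hT2 : (∑ x : (ZMod p)ˣ, (1 + h * (x : ZMod p) ^ k) ^ N * (x : ZMod p) ^ r)
        = if ψ j ≤ N then -((N.choose (ψ j) : ZMod p) * h ^ (ψ j)) else 0 := by
      have hexp : ∀ x : (ZMod p)ˣ, (1 + h * (x : ZMod p) ^ k) ^ N * (x : ZMod p) ^ r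
          = ∑ i ∈ range (N + 1), (N.choose i : ZMod p) * h ^ i * (x : ZMod p) ^ (k * i + r) := by
        intro x
        rw [add_comm (1 : ZMod p) _, add_pow, Finset.sum_mul]
        apply Finset.sum_congr rfl
        intro i _
        rw [one_pow, mul_one, mul_pow, ← pow_mul, pow_add, mul_comm k i]
        ring
      rw [Finset.sum_congr rfl (fun x _ => hexp x), Finset.sum_comm]
      have hinner : ∀ i ∈ range (N + 1),
          (∑ x : (ZMod p)ˣ, (N.choose i : ZMod p) * h ^ i * (x : ZMod p) ^ (k * i + r))
          = (N.choose i : ZMod p) * h ^ i * (if (p - 1) ∣ (k * i + r) then (-1 : ZMod p) else 0) := by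
        intro i _
        rw [← Finset.mul_sum, hSU]
      rw [Finset.sum_congr rfl hinner]
      by_cases hjN : ψ j ≤ N
      · rw [if_pos hjN]
        have hzero : ∀ i ∈ range (N + 1), i ≠ ψ j →
            (N.choose i : ZMod p) * h ^ i * (if (p - 1) ∣ (k * i + r) then (-1 : ZMod p) else 0) = 0 := by
          intro i hi hij
          rw [if_neg (fun hd => hij ((hdvd2 i (Nat.lt_succ_iff.mp (Finset.mem_range.mp hi))).mp hd)),
            mul_zero]
        rw [Finset.sum_eq_single_of_mem (ψ j) (Finset.mem_range.mpr (by omega)) hzero,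
          if_pos ((hdvd2 (ψ j) hjN).mpr rfl)]
        ring
      · rw [if_neg hjN]
        apply Finset.sum_eq_zero
        intro i hi
        have hiN : i ≤ N := Nat.lt_succ_iff.mp (Finset.mem_range.mp hi)
        rw [if_neg (fun hd => hjN (((hdvd2 i hiN).mp hd) ▸ hiN)), mul_zero]
    -- picking out single points
    have hpick : ∀ a : ZMod p, ∀ ha : a ≠ 0,
        (∑ x : (ZMod p)ˣ, (if (x : ZMod p) = a then (1 : ZMod p) else 0) * (x : ZMod p) ^ r)
        = a ^ r := by
      intro a ha
      have hterm : ∀ x : (ZMod p)ˣ, (if (x : ZMod p) = a then (1 : ZMod p) else 0) * (x : ZMod p) ^ r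
          = if x = Units.mk0 a ha then a ^ r else 0 := by
        intro x
        by_cases hxa : x = Units.mk0 a ha
        · subst hxa; simp
        · rw [if_neg hxa, if_neg, zero_mul]
          intro hval
          apply hxa
          ext
          simpa using hval
      rw [Finset.sum_congr rfl (fun x _ => hterm x), Finset.sum_ite_eq' Finset.univ]
      simp
    have hmr : (-1 : ZMod p) ^ r = (-1 : ZMod p) ^ j := by
      apply SlceAux.pow_eq_pow_of_mod_eq (n := 2) neg_one_sq
      have h2d : 2 ∣ r + j := dvd_trans ⟨N, by omega⟩ hrj
      omega
    have hx0r : x0 ^ r = u ^ j := by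
      have h1 : x0 ^ r * x0 ^ j = 1 := by
        rw [← pow_add]
        obtain ⟨c, hc⟩ := hrj
        rw [hc, pow_mul, ZMod.pow_card_sub_one_eq_one hx00, one_pow]
      have h2 : u ^ j * x0 ^ j = 1 := by
        rw [hudef, ← mul_pow, inv_mul_cancel₀ hx00, one_pow]
      calc x0 ^ r = x0 ^ r * (u ^ j * x0 ^ j) := by rw [h2, mul_one]
        _ = (x0 ^ r * x0 ^ j) * u ^ j := by ring
        _ = u ^ j := by rw [h1, one_mul]
    have hsum0 : (∑ x : (ZMod p)ˣ, ((1 + (x : ZMod p)) ^ N - (1 + h * (x : ZMod p) ^ k) ^ N) * (x : ZMod p) ^ r)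
        = (-(1 - h) ^ N) * ((-1 : ZMod p) ^ r) + ((1 + x0) ^ N) * (x0 ^ r) := by
      have hterm : ∀ x : (ZMod p)ˣ, ((1 + (x : ZMod p)) ^ N - (1 + h * (x : ZMod p) ^ k) ^ N) * (x : ZMod p) ^ r
          = (-(1 - h) ^ N) * ((if (x : ZMod p) = -1 then (1 : ZMod p) else 0) * (x : ZMod p) ^ r)
            + ((1 + x0) ^ N) * ((if (x : ZMod p) = x0 then (1 : ZMod p) else 0) * (x : ZMod p) ^ r) := by
        intro x
        rw [signid _ (Units.ne_zero x)]
        ring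
      rw [Finset.sum_congr rfl (fun x _ => hterm x), Finset.sum_add_distrib,
        ← Finset.mul_sum, ← Finset.mul_sum,
        hpick (-1) (neg_ne_zero.mpr one_ne_zero), hpick x0 hx00]
    have hsub : (∑ x : (ZMod p)ˣ, ((1 + (x : ZMod p)) ^ N - (1 + h * (x : ZMod p) ^ k) ^ N) * (x : ZMod p) ^ r)
        = (if j ≤ N then -(N.choose j : ZMod p) else 0)
          - (if ψ j ≤ N then -((N.choose (ψ j) : ZMod p) * h ^ (ψ j)) else 0) := by
      rw [← hT1, ← hT2, ← Finset.sum_sub_distrib]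
      apply Finset.sum_congr rfl
      intro x _
      ring
    rw [hsub, hmr, hx0r] at hsum0
    split_ifs at hsum0 ⊢ <;> linear_combination -hsum0
  -- binomial coefficient facts
  have hC0 : ∀ i : ℕ, i ≤ N → ((N.choose i : ZMod p)) ≠ 0 := by
    intro i hi hzero
    have hdvd : p ∣ N.choose i := (ZMod.natCast_eq_zero_iff _ _).mp hzero
    have hfac : N.choose i * i.factorial * (N - i).factorial = N.factorial :=
      Nat.choose_mul_factorial_mul_factorial hi
    have hpN' : p ∣ N.factorial := by
      rw [← hfac]
      exact Dvd.dvd.mul_right (Dvd.dvd.mul_right hdvd _) _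
    have := (Nat.Prime.dvd_factorial hp).mp hpN'
    omega
  have hCrec : ∀ i : ℕ, i < N →
      ((N.choose i : ZMod p)) * ((N : ZMod p) - (i : ZMod p))
        = ((N.choose (i + 1) : ZMod p)) * ((i : ZMod p) + 1) := by
    intro i hi
    have hnat := Nat.choose_succ_right_eq N i
    have : ((N.choose (i + 1) * (i + 1) : ℕ) : ZMod p) = ((N.choose i * (N - i) : ℕ) : ZMod p) := by
      rw [hnat]
    push_cast [Nat.cast_sub (le_of_lt hi)] at this
    linear_combination -this
  -- case split on h
  by_cases hcase : h = 1
  · -- main case : conclude t = 1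
    have hmaster1 : ∀ j : ℕ, j < p - 1 →
        (if j ≤ N then ((N.choose j : ZMod p)) else 0)
          = (if ψ j ≤ N then ((N.choose (ψ j) : ZMod p)) else 0) := by
      intro j hj
      have hm := master j hj
      rw [hcase] at hm
      have hx0m : x0 = -1 := hx0neg1.mpr hcase
      have e1 : ((1 : ZMod p) - 1) ^ N = 0 := by
        rw [sub_self, zero_pow hNne]
      have e2 : ((1 : ZMod p) + x0) ^ N = 0 := by
        rw [hx0m, add_neg_cancel, zero_pow hNne]
      rw [e1, e2] at hm
      simp only [one_pow, mul_one] at hm ⊢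
      linear_combination hm
    have hiff : ∀ j : ℕ, j < p - 1 → (j ≤ N ↔ ψ j ≤ N) := by
      intro j hj
      have := hmaster1 j hj
      constructor
      · intro hjN
        by_contra hcon
        rw [if_pos hjN, if_neg hcon] at this
        exact hC0 j hjN this
      · intro hjN
        by_contra hcon
        rw [if_neg hcon, if_pos hjN] at this
        exact hC0 (ψ j) hjN this.symm
    -- kb must be 1
    have hkb1 : kb = 1 := by
      by_contra hkbne
      have hkb0 : kb ≠ 0 := by
        intro h0
        rw [h0] at hkbcop
        simp [Nat.Coprime] at hkbcop
        omega
      have hkb2 : 2 ≤ kb := by omega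
      -- first, kb ≤ N
      have hkbN : kb ≤ N := by
        have h1N : (1 : ℕ) ≤ N := by omega
        have := (hiff 1 (by omega)).mp h1N
        rw [hψdef] at this
        simpa [Nat.mod_eq_of_lt hkblt] using this
      -- contradiction with j = N / kb + 1
      set j : ℕ := N / kb + 1 with hjdef
      have hjN : j ≤ N := by
        have : N / kb ≤ N / 2 := Nat.div_le_div_left hkb2 (by omega)
        have : N / 2 + 1 ≤ N := by omega
        omega
      have hexp : kb * j = kb * (N / kb) + kb := by rw [hjdef]; ring
      have hdm := Nat.div_add_mod N kb
      have hmlt : N % kb < kb := Nat.mod_lt _ (by omega)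
      have hlow : N < kb * j := by omega
      have hup : kb * j ≤ N + kb := by omega
      have hne2N : kb * j ≠ 2 * N := by
        intro heq
        have hdvd : kb ∣ p - 1 := by
          rw [hM2N, ← heq]
          exact Dvd.intro j rfl
        have := Nat.Coprime.eq_one_of_dvd hkbcop hdvd
        omega
      have hjlt : kb * j < p - 1 := by omega
      have hψj : ψ j = kb * j := by
        rw [hψdef]
        exact Nat.mod_eq_of_lt hjlt
      have := (hiff j (by omega)).mp hjN
      rw [hψj] at this
      omega
    -- conclude t = 1
    have : ((t⁻¹ : (ZMod (p - 1))ˣ) : ZMod (p - 1)) = 1 := by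
      have : ((kb : ℕ) : ZMod (p - 1)) = 1 := by rw [hkb1, Nat.cast_one]
      rw [hkbcast] at this
      exact this
    have ht1 : t⁻¹ = 1 := Units.ext this
    rw [← inv_inv t, ht1, inv_one]
  · -- contradiction case
    exfalso
    have hx0ne : x0 ≠ -1 := fun hcon => hcase (hx0neg1.mp hcon)
    have h1h : (1 : ZMod p) - h ≠ 0 := by
      intro hz; apply hcase; linear_combination -hz
    have hmone0 : (-1 : ZMod p) ≠ 0 := neg_ne_zero.mpr one_ne_zero
    have hA : ((1 : ZMod p) - h) ^ N = 1 := by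
      have hk1 : (-1 : ZMod p) ^ k = -1 := Odd.neg_one_pow (Nat.odd_iff.mpr hkodd)
      have hkey := key (-1) hmone0
      have hsq0 : IsSquare ((-1 : ZMod p) + 1) := by
        rw [neg_add_cancel]; exact IsSquare.zero
      have h2 : IsSquare (h * (-1 : ZMod p) ^ k + 1) := by
        by_contra hcon
        exact (hkey.mpr hcon) hsq0
      rw [hk1] at h2
      have h2' : IsSquare ((1 : ZMod p) - h) := by
        have heq : h * (-1 : ZMod p) + 1 = 1 - h := by ring
        rwa [heq] at h2
      exact (hsq _ h1h).mp h2'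
    have h1x0 : (1 : ZMod p) + x0 ≠ 0 := by
      intro hz; apply hx0ne; linear_combination hz
    have hB : ((1 : ZMod p) + x0) ^ N = 1 := by
      have hkey := key x0 hx00
      have hx0k1 : h * x0 ^ k + 1 = 0 := by
        rw [hx0k]; field_simp; ring
      have hsq0 : IsSquare (h * x0 ^ k + 1) := by
        rw [hx0k1]; exact IsSquare.zero
      have h2 : IsSquare (x0 + 1) := by
        by_contra hcon
        exact (hkey.mp hcon) hsq0
      rw [add_comm] at h2
      exact (hsq _ h1x0).mp h2
    have masterval : ∀ j : ℕ, j < p - 1 →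
        ((if j ≤ N then ((N.choose j : ZMod p)) else 0)
          - (if ψ j ≤ N then ((N.choose (ψ j) : ZMod p)) * h ^ (ψ j) else 0))
        = (-1 : ZMod p) ^ j - u ^ j := by
      intro j hj
      have hm := master j hj
      rwa [hA, hB, one_mul, one_mul] at hm
    set M1 : Finset ℕ := (range (N + 1)).filter (fun j => N < ψ j) with hM1def
    have hM1mem : ∀ j, j ∈ M1 ↔ (j ≤ N ∧ N < ψ j) := by
      intro j
      rw [hM1def, Finset.mem_filter, Finset.mem_range]
      omega
    have hM1val : ∀ j ∈ M1, ((N.choose j : ZMod p)) = (-1 : ZMod p) ^ j - u ^ j := by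
      intro j hj
      obtain ⟨hjN, hψj⟩ := (hM1mem j).mp hj
      have hm := masterval j (by omega)
      rw [if_pos hjN, if_neg (by omega)] at hm
      linear_combination hm
    set w : ZMod p := -u with hwdef
    have hw0 : w ≠ 0 := neg_ne_zero.mpr hu0
    have h1u : (1 : ZMod p) + u ≠ 0 := by
      intro hz
      apply hx0ne
      have hu1 : u = -1 := by linear_combination hz
      rw [hudef] at hu1
      have hii := congrArg (fun z : ZMod p => z⁻¹) hu1
      simpa [inv_neg, inv_inv] using hii
    have hwne1 : w ≠ 1 := by
      intro hcon
      apply h1u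
      rw [hwdef] at hcon
      linear_combination -hcon
    set d : ℕ := orderOf w with hddef
    have hwp : w ^ (p - 1) = 1 := ZMod.pow_card_sub_one_eq_one hw0
    have hdvdw : d ∣ p - 1 := orderOf_dvd_of_pow_eq_one hwp
    have hdpos : 0 < d := by
      rcases Nat.eq_zero_or_pos d with h0 | h1
      · exfalso; rw [h0] at hdvdw; have := Nat.eq_zero_of_zero_dvd hdvdw; omega
      · exact h1
    have hd1 : d ≠ 1 := by
      intro hcon
      exact hwne1 (orderOf_eq_one_iff.mp (by rw [← hddef, hcon]))
    have hd2' : 2 ≤ d := by omega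
    have hOval : ∀ j : ℕ, N < j → j < p - 1 → N < ψ j → d ∣ j := by
      intro j h1 h2 h3
      apply orderOf_dvd_of_pow_eq_one
      have hm := masterval j h2
      rw [if_neg (by omega), if_neg (by omega)] at hm
      have huj : u ^ j = (-1 : ZMod p) ^ j := by linear_combination hm
      rw [hwdef, neg_pow, huj, ← pow_add]
      exact Even.neg_one_pow ⟨j, rfl⟩
    -- counting : M1.card + O.card = N - 1
    set O : Finset ℕ := (Finset.Ico (N + 1) (p - 1)).filter (fun j => N < ψ j) with hOdef
    have hψinv : ∀ b : ℕ, b < p - 1 → ψ ((k * b) % (p - 1)) = b := by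
      intro b hb
      apply SlceAux.cast_inj_of_lt (hψlt _) hb
      rw [hψcast]
      push_cast [ZMod.natCast_mod]
      rw [hkcast, ← mul_assoc, ← Units.val_mul, inv_mul_cancel, Units.val_one, one_mul]
    have hψinj : ∀ a b : ℕ, a < p - 1 → b < p - 1 → ψ a = ψ b → a = b := by
      intro a b ha hb hab
      have h1 := hψcast a
      have h2 := hψcast b
      rw [hab] at h1
      have h3 := h1.symm.trans h2
      have h4 := congrArg (fun z => ((t : ZMod (p - 1))) * z) h3
      simp only [← mul_assoc, ← Units.val_mul, mul_inv_cancel, Units.val_one, one_mul] at h4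
      exact SlceAux.cast_inj_of_lt ha hb h4
    have hsplitcard : M1.card + O.card = N - 1 := by
      have hdisj : Disjoint M1 O := by
        rw [Finset.disjoint_left]
        intro a haM haO
        rw [hM1mem] at haM
        rw [hOdef, Finset.mem_filter, Finset.mem_Ico] at haO
        omega
      have hunion : M1 ∪ O = (range (p - 1)).filter (fun j => N < ψ j) := by
        ext a
        rw [Finset.mem_union, hM1mem, hOdef, Finset.mem_filter, Finset.mem_Ico,
          Finset.mem_filter, Finset.mem_range]
        constructor
        · rintro (⟨h1, h2⟩ | ⟨⟨h1, h2⟩, h3⟩)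
          · exact ⟨by omega, h2⟩
          · exact ⟨by omega, h3⟩
        · rintro ⟨h1, h2⟩
          by_cases haN : a ≤ N
          · exact Or.inl ⟨haN, h2⟩
          · exact Or.inr ⟨⟨by omega, h1⟩, h2⟩
      have hbij : ((range (p - 1)).filter (fun j => N < ψ j)).card
          = ((range (p - 1)).filter (fun i => N < i)).card := by
        apply Finset.card_bij (fun j _ => ψ j)
        · intro a ha
          rw [Finset.mem_filter, Finset.mem_range] at ha ⊢
          exact ⟨hψlt a, ha.2⟩
        · intro a ha b hb hab
          rw [Finset.mem_filter, Finset.mem_range] at ha hb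
          exact hψinj a b ha.1 hb.1 hab
        · intro b hb
          rw [Finset.mem_filter, Finset.mem_range] at hb
          refine ⟨(k * b) % (p - 1), ?_, hψinv b hb.1⟩
          rw [Finset.mem_filter, Finset.mem_range]
          refine ⟨Nat.mod_lt _ (by omega), ?_⟩
          rw [hψinv b hb.1]
          exact hb.2
      have hIco : (range (p - 1)).filter (fun i => N < i) = Finset.Ico (N + 1) (p - 1) := by
        ext a
        rw [Finset.mem_filter, Finset.mem_range, Finset.mem_Ico]
        omega
      have hcard2 : ((range (p - 1)).filter (fun j => N < ψ j)).card = N - 1 := by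
        rw [hbij, hIco, Nat.card_Ico]
        omega
      rw [← hcard2, ← hunion]
      exact (Finset.card_union_of_disjoint hdisj).symm
    have hOsub : O ⊆ (Finset.Ico (N + 1) (p - 1)).filter (fun x => d ∣ x) := by
      intro a ha
      rw [hOdef, Finset.mem_filter, Finset.mem_Ico] at ha
      rw [Finset.mem_filter, Finset.mem_Ico]
      exact ⟨⟨ha.1.1, ha.1.2⟩, hOval a ha.1.1 ha.1.2 ha.2⟩
    have hOcard : O.card ≤ (p - 2) / d + 1 - (N + 1) / d := by
      refine le_trans (Finset.card_le_card hOsub) ?_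
      have := SlceAux.multiples_card_le (a := N + 1) (b := p - 1) (d := d) hdpos
      rw [show p - 2 = p - 1 - 1 by omega]
      convert this using 3
    -- pair equation
    have hstar : ∀ j : ℕ, j ∈ M1 → (j + 1) ∈ M1 →
        (-1 : ZMod p) ^ j * ((N : ZMod p) + 1)
          = u ^ j * (((N : ZMod p) - (j : ZMod p)) - u * ((j : ZMod p) + 1)) := by
      intro j hj hj1
      have hjN1 : j + 1 ≤ N := ((hM1mem _).mp hj1).1
      have e1 := hM1val j hj
      have e2 := hM1val (j + 1) hj1
      have r1 := hCrec j (by omega)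
      rw [e1, e2] at r1
      have hp1 : (-1 : ZMod p) ^ (j + 1) = -(-1 : ZMod p) ^ j := by
        rw [pow_succ]; ring
      have hp2 : u ^ (j + 1) = u ^ j * u := pow_succ u j
      rw [hp1, hp2] at r1
      push_cast at r1
      linear_combination r1
    -- triple equation
    have htriple : ∀ j : ℕ, j ∈ M1 → (j + 1) ∈ M1 → (j + 2) ∈ M1 →
        ((j : ZMod p)) * (1 + u) = (N : ZMod p) - 2 * u := by
      intro j h0 h1 h2
      have s1 := hstar j h0 h1
      have s2 := hstar (j + 1) h1 (by rw [show j + 1 + 1 = j + 2 by omega]; exact h2)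
      have hp1 : (-1 : ZMod p) ^ (j + 1) = -(-1 : ZMod p) ^ j := by
        rw [pow_succ]; ring
      have hp2 : u ^ (j + 1) = u ^ j * u := pow_succ u j
      rw [hp1, hp2] at s2
      push_cast at s2
      have hcomb : u ^ j * ((1 + u) * (((N : ZMod p) - 2 * u) - (j : ZMod p) * (1 + u))) = 0 := by
        linear_combination -s1 - s2
      rcases mul_eq_zero.mp hcomb with hz | hz
      · exact absurd hz (pow_ne_zero _ hu0)
      rcases mul_eq_zero.mp hz with hz2 | hz2
      · exact absurd hz2 h1u
      · linear_combination -hz2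
    have hM1sub : M1 ⊆ range (N + 1) := by
      rw [hM1def]; exact Finset.filter_subset _ _
    have h2N2 : (2 : ZMod p) * (N : ZMod p) + 2 = 1 := by
      have h1 : ((2 * N + 1 : ℕ) : ZMod p) = 0 := by rw [← hpN]; exact ZMod.natCast_self p
      push_cast at h1
      linear_combination h1
    have hm2ne : (-2 : ZMod p) ≠ 0 := by
      intro hz; apply htwo; linear_combination -hz
    rcases show d = 2 ∨ d = 3 ∨ 4 ≤ d by omega with hd2 | hd3 | hd4
    · -- case d = 2 : u = 1
      have hw2 : w ^ 2 = 1 := by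
        have hpw := pow_orderOf_eq_one w
        rwa [← hddef, hd2] at hpw
      have hwm1 : w = -1 := by
        have hww : w * w = 1 := by
          have : w ^ 2 = w * w := pow_two w
          rw [← this]; exact hw2
        have := mul_self_eq_one_iff.mp hww
        tauto
      have hu1 : u = 1 := by
        rw [hwdef] at hwm1
        linear_combination -hwm1
      have hModd : ∀ j ∈ M1, j % 2 = 1 ∧ ((N.choose j : ZMod p)) = -2 := by
        intro j hj
        have hv := hM1val j hj
        rw [hu1, one_pow] at hv
        rcases Nat.even_or_odd j with he | ho
        · exfalso
          rw [he.neg_one_pow] at hv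
          have : ((N.choose j : ZMod p)) = 0 := by rw [hv]; ring
          exact hC0 j ((hM1mem j).mp hj).1 this
        · rw [ho.neg_one_pow] at hv
          exact ⟨Nat.odd_iff.mp ho, by rw [hv]; ring⟩
      set A : Finset ℕ := M1.image (fun j => j / 2) with hAdef
      have hAcard : A.card = M1.card := by
        rw [hAdef]
        apply Finset.card_image_of_injOn
        intro a ha b hb hab
        have h1 := (hModd a ha).1
        have h2 := (hModd b hb).1
        simp only at hab
        omega
      have hAsub : A ⊆ range (N / 2) := by
        intro a ha
        rw [hAdef] at ha
        obtain ⟨j, hj, hje⟩ := Finset.mem_image.mp ha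
        have h1 := (hModd j hj).1
        have h2 := ((hM1mem j).mp hj).1
        rw [Finset.mem_range]
        omega
      have hAsub' : A ⊆ range (N / 2 + 1) := by
        intro x hx
        have := hAsub hx
        rw [Finset.mem_range] at this ⊢
        omega
      have himgsub : A.image (fun x => x + 1) ⊆ range (N / 2 + 1) := by
        intro x hx
        obtain ⟨a, ha, rfl⟩ := Finset.mem_image.mp hx
        have := hAsub ha
        rw [Finset.mem_range] at this ⊢
        omega
      have hpairs := SlceAux.inter_card_bound hAsub' himgsub
      rw [Finset.card_image_of_injective _ (add_left_injective 1), hAcard, Finset.card_range] at hpairs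
      set P : Finset ℕ := A ∩ A.image (fun x => x + 1) with hPdef
      have hP2 : 1 < P.card := by
        rw [hd2] at hOcard
        omega
      have hPext : ∀ x ∈ P, 1 ≤ x ∧ (2 * x - 1) ∈ M1 ∧ (2 * x + 1) ∈ M1 := by
        intro x hx
        rw [hPdef, Finset.mem_inter] at hx
        obtain ⟨hx1, hx2⟩ := hx
        obtain ⟨a', ha', hae⟩ := Finset.mem_image.mp hx2
        constructor
        · omega
        constructor
        · rw [hAdef] at ha'
          obtain ⟨j, hj, hje⟩ := Finset.mem_image.mp ha'
          have hodd := (hModd j hj).1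
          have : j = 2 * x - 1 := by omega
          rwa [← this]
        · rw [hAdef] at hx1
          obtain ⟨j, hj, hje⟩ := Finset.mem_image.mp hx1
          have hodd := (hModd j hj).1
          have : j = 2 * x + 1 := by omega
          rwa [← this]
      have hgap2 : ∀ j : ℕ, j ∈ M1 → (j + 2) ∈ M1 →
          ((j : ℕ) : ZMod p) = ((N : ZMod p) - 2) * ((N : ZMod p) + 1) := by
        intro j h0 h2
        have hj2N : j + 2 ≤ N := ((hM1mem _).mp h2).1
        have e0 := (hModd j h0).2
        have e2 := (hModd (j + 2) h2).2
        have r1 := hCrec j (by omega)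
        have r2 := hCrec (j + 1) (by omega)
        rw [e0] at r1
        rw [show j + 1 + 1 = j + 2 by omega, e2] at r2
        push_cast at r1 r2
        have hq' : (-2 : ZMod p) * ((((N : ZMod p) - j) * ((N : ZMod p) - j - 1)))
            = (-2 : ZMod p) * ((((j : ZMod p) + 1) * ((j : ZMod p) + 2))) := by
          linear_combination ((N : ZMod p) - (j : ZMod p) - 1) * r1 + ((j : ZMod p) + 1) * r2
        have hq := mul_left_cancel₀ hm2ne hq'
        linear_combination -hq - ((j : ZMod p)) * h2N2
      obtain ⟨x, hx, y, hy, hxy⟩ := Finset.one_lt_card.mp hP2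
      obtain ⟨hx1, hxm, hxp⟩ := hPext x hx
      obtain ⟨hy1, hym, hyp⟩ := hPext y hy
      have ex := hgap2 (2 * x - 1) hxm (by rw [show 2 * x - 1 + 2 = 2 * x + 1 by omega]; exact hxp)
      have ey := hgap2 (2 * y - 1) hym (by rw [show 2 * y - 1 + 2 = 2 * y + 1 by omega]; exact hyp)
      have hxycast : ((2 * x - 1 : ℕ) : ZMod p) = ((2 * y - 1 : ℕ) : ZMod p) := ex.trans ey.symm
      have hxb : 2 * x - 1 ≤ N := ((hM1mem _).mp hxm).1
      have hyb : 2 * y - 1 ≤ N := ((hM1mem _).mp hym).1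
      have := SlceAux.cast_inj_of_lt (show 2 * x - 1 < p by omega) (show 2 * y - 1 < p by omega) hxycast
      omega
    · -- case d = 3
      have hw3 : w ^ 3 = 1 := by
        have hpw := pow_orderOf_eq_one w
        rwa [← hddef, hd3] at hpw
      have hu6 : u ^ 6 = 1 := by
        have hw6 : w ^ 6 = 1 := by
          rw [show (6 : ℕ) = 3 * 2 by norm_num, pow_mul, hw3, one_pow]
        rw [hwdef, neg_pow, Even.neg_one_pow (by decide), one_mul] at hw6
        exact hw6
      have hsub1 : M1 ⊆ range (N + 2) := by
        intro x hx
        have := hM1sub hx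
        rw [Finset.mem_range] at this ⊢
        omega
      have hsub2 : M1.image (fun x => x + 1) ⊆ range (N + 2) := by
        intro x hx
        obtain ⟨a, ha, rfl⟩ := Finset.mem_image.mp hx
        have := hM1sub ha
        rw [Finset.mem_range] at this ⊢
        omega
      have hpairs := SlceAux.inter_card_bound hsub1 hsub2
      rw [Finset.card_image_of_injective _ (add_left_injective 1), Finset.card_range] at hpairs
      set P : Finset ℕ := M1 ∩ M1.image (fun x => x + 1) with hPdef
      have hP7 : 6 < P.card := by
        rw [hd3] at hOcard
        omega
      obtain ⟨x, hx, y, hy, hxy, hmod6⟩ := Finset.exists_ne_map_eq_of_card_lt_of_maps_to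
        (show (range 6).card < P.card by rw [Finset.card_range]; exact hP7)
        (fun a _ => Finset.mem_range.mpr (Nat.mod_lt a (by norm_num)))
      have hPext : ∀ z ∈ P, 1 ≤ z ∧ (z - 1) ∈ M1 ∧ z ∈ M1 := by
        intro z hz
        rw [hPdef, Finset.mem_inter] at hz
        obtain ⟨hz1, hz2⟩ := hz
        obtain ⟨a, ha, hae⟩ := Finset.mem_image.mp hz2
        have haz : a = z - 1 := by omega
        exact ⟨by omega, haz ▸ ha, hz1⟩
      obtain ⟨hx1, hxm, hxp⟩ := hPext x hx
      obtain ⟨hy1, hym, hyp⟩ := hPext y hy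
      have s1 := hstar (x - 1) hxm (by rw [show x - 1 + 1 = x by omega]; exact hxp)
      have s2 := hstar (y - 1) hym (by rw [show y - 1 + 1 = y by omega]; exact hyp)
      have hmod6' : x % 6 = y % 6 := hmod6
      have hmj : (x - 1) % 6 = (y - 1) % 6 := by omega
      have hppow : (-1 : ZMod p) ^ (x - 1) = (-1 : ZMod p) ^ (y - 1) :=
        SlceAux.pow_eq_pow_of_mod_eq (n := 2) neg_one_sq (by omega)
      have hupow : u ^ (x - 1) = u ^ (y - 1) :=
        SlceAux.pow_eq_pow_of_mod_eq hu6 hmj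
      rw [← hppow, ← hupow] at s2
      have hcomb : u ^ (x - 1) * ((1 + u) * (((x - 1 : ℕ) : ZMod p) - ((y - 1 : ℕ) : ZMod p))) = 0 := by
        linear_combination s1 - s2
      rcases mul_eq_zero.mp hcomb with hz | hz
      · exact absurd hz (pow_ne_zero _ hu0)
      rcases mul_eq_zero.mp hz with hz2 | hz2
      · exact absurd hz2 h1u
      · have hcast : ((x - 1 : ℕ) : ZMod p) = ((y - 1 : ℕ) : ZMod p) := by
          linear_combination hz2
        have hxb : x - 1 ≤ N := ((hM1mem _).mp hxm).1
        have hyb : y - 1 ≤ N := ((hM1mem _).mp hym).1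
        have := SlceAux.cast_inj_of_lt (show x - 1 < p by omega) (show y - 1 < p by omega) hcast
        omega
    · -- case 4 ≤ d
      have hsuper : (p - 2) / d ≤ (N + 1) / d + (N - 2) / d + 1 := by
        have heq : p - 2 = (N + 1) + (N - 2) := by omega
        rw [heq, Nat.add_div hdpos]
        split_ifs <;> omega
      have hdled : (N - 2) / d ≤ (N - 2) / 4 := Nat.div_le_div_left hd4 (by norm_num)
      have hObd : O.card ≤ (N - 2) / 4 + 2 := by omega
      have hsub1 : M1 ⊆ range (N + 3) := by
        intro z hz
        have := hM1sub hz
        rw [Finset.mem_range] at this ⊢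
        omega
      have hsub2 : M1.image (fun x => x + 1) ⊆ range (N + 3) := by
        intro z hz
        obtain ⟨a, ha, rfl⟩ := Finset.mem_image.mp hz
        have := hM1sub ha
        rw [Finset.mem_range] at this ⊢
        omega
      have hsub3 : M1.image (fun x => x + 2) ⊆ range (N + 3) := by
        intro z hz
        obtain ⟨a, ha, rfl⟩ := Finset.mem_image.mp hz
        have := hM1sub ha
        rw [Finset.mem_range] at this ⊢
        omega
      have hb1 := SlceAux.inter_card_bound hsub1 hsub2
      rw [Finset.card_image_of_injective _ (add_left_injective 1), Finset.card_range] at hb1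
      have hsubP : (M1 ∩ M1.image (fun x => x + 1)) ⊆ range (N + 3) :=
        fun z hz => hsub1 (Finset.mem_of_mem_inter_left hz)
      have hb2 := SlceAux.inter_card_bound hsubP hsub3
      rw [Finset.card_image_of_injective _ (add_left_injective 2), Finset.card_range] at hb2
      set T : Finset ℕ := (M1 ∩ M1.image (fun x => x + 1)) ∩ M1.image (fun x => x + 2) with hTdef
      have hT2 : 1 < T.card := by omega
      have hTex : ∀ z ∈ T, 2 ≤ z ∧ (z - 2) ∈ M1 ∧ (z - 1) ∈ M1 ∧ z ∈ M1 := by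
        intro z hz
        rw [hTdef, Finset.mem_inter, Finset.mem_inter] at hz
        obtain ⟨⟨hz1, hz2⟩, hz3⟩ := hz
        obtain ⟨a, ha, hae⟩ := Finset.mem_image.mp hz2
        obtain ⟨b, hb, hbe⟩ := Finset.mem_image.mp hz3
        have ha' : a = z - 1 := by omega
        have hb' : b = z - 2 := by omega
        exact ⟨by omega, hb' ▸ hb, ha' ▸ ha, hz1⟩
      have hval : ∀ z ∈ T, (((z - 2 : ℕ) : ZMod p)) * (1 + u) = (N : ZMod p) - 2 * u := by
        intro z hz
        obtain ⟨h2z, hm2, hm1, hm0⟩ := hTex z hz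
        exact htriple (z - 2) hm2
          (by rw [show z - 2 + 1 = z - 1 by omega]; exact hm1)
          (by rw [show z - 2 + 2 = z by omega]; exact hm0)
      obtain ⟨x, hx, y, hy, hxy⟩ := Finset.one_lt_card.mp hT2
      have e1 := hval x hx
      have e2 := hval y hy
      have hcomb : (1 + u) * (((x - 2 : ℕ) : ZMod p) - ((y - 2 : ℕ) : ZMod p)) = 0 := by
        linear_combination e1 - e2
      rcases mul_eq_zero.mp hcomb with hz | hz
      · exact h1u hz
      · have hcast : ((x - 2 : ℕ) : ZMod p) = ((y - 2 : ℕ) : ZMod p) := by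
          linear_combination hz
        have hxN : x - 2 ≤ N := ((hM1mem _).mp (hTex x hx).2.1).1
        have hyN : y - 2 ≤ N := ((hM1mem _).mp (hTex y hy).2.1).1
        have := SlceAux.cast_inj_of_lt (show x - 2 < p by omega) (show y - 2 < p by omega) hcast
        have h2x := (hTex x hx).1
        have h2y := (hTex y hy).1
        omega
end

section
/- Let p be a prime with p − 1 = 4m for some integer m with gcd(m, 3) = 1, and let p > 101 (= 10² + 1). Let S be the SLCE almost difference set over 𝔽_p^*. Then the multiplier group of S is trivial: every unit t of ℤ/(p-1)ℤ that is a multiplier of S equals 1. -/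
open Finset

section SLCEAux

variable {p : ℕ} [hpf : Fact p.Prime]

lemma pow_reduce {x : ZMod p} (hx : x ≠ 0) (e : ℕ) :
    x ^ e = x ^ (e % (p - 1)) := by
  conv_lhs => rw [← Nat.div_add_mod e (p - 1)]
  rw [pow_add, pow_mul, ZMod.pow_card_sub_one_eq_one hx, one_pow, one_mul]

lemma sum_pow_zmod {e : ℕ} (he : 1 ≤ e) :
    ∑ y : ZMod p, y ^ e = if (p - 1) ∣ e then (-1 : ZMod p) else 0 := by
  have hp1 : 1 < p := hpf.out.one_lt
  by_cases hd : (p - 1) ∣ e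
  · rw [if_pos hd]
    have hterm : ∀ y : ZMod p, y ^ e = if y = 0 then 0 else 1 := by
      intro y
      split_ifs with hy
      · subst hy; exact zero_pow (by omega)
      · obtain ⟨c, rfl⟩ := hd
        rw [pow_mul, ZMod.pow_card_sub_one_eq_one hy, one_pow]
    rw [Finset.sum_congr rfl fun y _ => hterm y]
    have h2 : ∀ y : ZMod p,
        (if y = 0 then (0:ZMod p) else 1) = 1 - (if y = 0 then 1 else 0) := by
      intro y; split_ifs <;> ring
    rw [Finset.sum_congr rfl fun y _ => h2 y, Finset.sum_sub_distrib, Finset.sum_const,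
      Finset.sum_ite_eq' Finset.univ (0 : ZMod p) (fun _ => (1 : ZMod p))]
    rw [Finset.card_univ, ZMod.card, nsmul_eq_mul, mul_one, ZMod.natCast_self]
    simp
  · rw [if_neg hd]
    have he' : e % (p - 1) ≠ 0 := fun h0 => hd (Nat.dvd_of_mod_eq_zero h0)
    have hterm : ∀ y : ZMod p, y ^ e = y ^ (e % (p - 1)) := by
      intro y
      by_cases hy : y = 0
      · subst hy; rw [zero_pow (by omega), zero_pow he']
      · exact pow_reduce hy e
    rw [Finset.sum_congr rfl fun y _ => hterm y]
    have hlt : e % (p - 1) < Fintype.card (ZMod p) - 1 := by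
      rw [ZMod.card]; exact Nat.mod_lt _ (by omega)
    exact FiniteField.sum_pow_lt_card_sub_one (K := ZMod p) _ hlt

lemma choose_cast_ne_zero {n : ℕ} (hn : n < p) (hh : p / 2 ≤ n) :
    ((n.choose (p / 2) : ℕ) : ZMod p) ≠ 0 := by
  rw [Ne, ZMod.natCast_eq_zero_iff]
  intro hdvd
  have hdd : n.choose (p / 2) ∣ n.factorial :=
    ⟨(p / 2).factorial * (n - p / 2).factorial, by
      rw [← mul_assoc, Nat.choose_mul_factorial_mul_factorial hh]⟩
  have := (Nat.Prime.dvd_factorial hpf.out).mp (hdvd.trans hdd)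
  omega

lemma cast_sub_eq {i j : ℕ} (hij : i + j = p) : ((i : ℕ) : ZMod p) = -(j : ZMod p) := by
  have := congrArg (Nat.cast : ℕ → ZMod p) hij
  push_cast at this ⊢
  rw [ZMod.natCast_self] at this
  linear_combination this

lemma row_p2 {k : ℕ} (hk : k ≤ p - 2) :
    ((Nat.choose (p - 2) k : ℕ) : ZMod p) * (-1) ^ k = ((k + 1 : ℕ) : ZMod p) := by
  have hp1 : 1 < p := hpf.out.one_lt
  induction k with
  | zero => simp
  | succ k ih =>
    have hk' : k ≤ p - 2 := by omega
    have ihk := ih hk'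
    have hnat := Nat.choose_succ_right_eq (p - 2) k
    have hcast := congrArg (Nat.cast : ℕ → ZMod p) hnat
    push_cast at hcast
    have hsub : ((p - 2 - k : ℕ) : ZMod p) = -((k + 2 : ℕ) : ZMod p) := by
      have h1 : (p - 2 - k) + (k + 2) = p := by omega
      have := congrArg (Nat.cast : ℕ → ZMod p) h1
      push_cast at this ⊢
      rw [ZMod.natCast_self] at this
      linear_combination this
    rw [hsub] at hcast
    push_cast at hcast
    have hk1 : ((k : ZMod p) + 1) ≠ 0 := by
      have : ((k + 1 : ℕ) : ZMod p) ≠ 0 := by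
        rw [Ne, ZMod.natCast_eq_zero_iff]
        intro hdvd
        have := Nat.le_of_dvd (by omega) hdvd
        omega
      push_cast at this; exact this
    apply mul_right_cancel₀ hk1
    push_cast
    push_cast at ihk
    linear_combination (-1 : ZMod p) ^ (k + 1) * hcast + ((k : ZMod p) + 2) * ihk

lemma row_p3 {k : ℕ} (hk : k ≤ p - 3) (hp5 : 5 ≤ p) :
    ((Nat.choose (p - 3) k : ℕ) : ZMod p) * (-1) ^ k * 2 = (((k + 1) * (k + 2) : ℕ) : ZMod p) := by
  induction k with
  | zero => norm_num
  | succ k ih =>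
    have hk' : k ≤ p - 3 := by omega
    have ihk := ih hk'
    have hnat := Nat.choose_succ_right_eq (p - 3) k
    have hcast := congrArg (Nat.cast : ℕ → ZMod p) hnat
    push_cast at hcast
    have hsub : ((p - 3 - k : ℕ) : ZMod p) = -((k + 3 : ℕ) : ZMod p) := by
      have h1 : (p - 3 - k) + (k + 3) = p := by omega
      have := congrArg (Nat.cast : ℕ → ZMod p) h1
      push_cast at this ⊢
      rw [ZMod.natCast_self] at this
      linear_combination this
    rw [hsub] at hcast
    push_cast at hcast
    have hk1 : ((k : ZMod p) + 1) ≠ 0 := by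
      have : ((k + 1 : ℕ) : ZMod p) ≠ 0 := by
        rw [Ne, ZMod.natCast_eq_zero_iff]
        intro hdvd
        have := Nat.le_of_dvd (by omega) hdvd
        omega
      push_cast at this; exact this
    apply mul_right_cancel₀ hk1
    push_cast
    push_cast at ihk
    linear_combination 2 * (-1 : ZMod p) ^ (k + 1) * hcast + ((k : ZMod p) + 3) * ihk

/-- The key power-sum formula for the SLCE set. -/
lemma key_sum (hp4 : p % 4 = 1) (hbig : 11 < p)
    (T : Finset (ZMod p)) (hT : ∀ x, x ∈ T ↔ x ≠ 0 ∧ ¬ IsSquare (x + 1))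
    {n : ℕ} (h1 : 1 ≤ n) (h2 : n ≤ p - 2) :
    (2 : ZMod p) * ∑ x ∈ T, x ^ n
      = (-1) ^ n * ((if p / 2 ≤ n then ((n.choose (p / 2) : ℕ) : ZMod p) else 0) - 1) := by
  classical
  set h := p / 2 with hh
  have hh2 : 2 * h = p - 1 := by omega
  have hhe : Even h := by rw [Nat.even_iff]; omega
  have hh1 : 1 ≤ h := by omega
  -- Step A : reindex
  set U : Finset (ZMod p) := Finset.univ.filter (fun y : ZMod p => ¬ IsSquare y) with hU
  have hTU : T = U.image (fun y => y - 1) := by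
    ext x
    simp only [hT, hU, Finset.mem_image, Finset.mem_filter, Finset.mem_univ, true_and]
    constructor
    · rintro ⟨hx0, hxs⟩
      exact ⟨x + 1, hxs, by ring⟩
    · rintro ⟨y, hy, rfl⟩
      refine ⟨?_, ?_⟩
      · have hy1 : y ≠ 1 := fun hy1 => hy (hy1 ▸ IsSquare.one)
        exact sub_ne_zero.mpr hy1
      · simpa using hy
  have hsumT : ∑ x ∈ T, x ^ n = ∑ y ∈ U, (y - 1) ^ n := by
    rw [hTU, Finset.sum_image]
    intro x _ y _ hxy
    exact sub_left_injective hxy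
  -- Step B : indicator
  have hstepB : ∑ y : ZMod p, (y - 1) ^ n * (1 - y ^ h)
      = 2 * ∑ y ∈ U, (y - 1) ^ n + (-1) ^ n := by
    have hpt : ∀ y : ZMod p, (y - 1) ^ n * (1 - y ^ h)
        = (if y ∈ U then 2 * (y - 1) ^ n else 0) + (if y = 0 then (-1 : ZMod p) ^ n else 0) := by
      intro y
      by_cases hy0 : y = 0
      · subst hy0
        have h0U : (0 : ZMod p) ∉ U := by
          simp only [hU, Finset.mem_filter, Finset.mem_univ, true_and, not_not]
          exact ⟨0, by ring⟩
        rw [if_neg h0U, if_pos rfl, zero_pow (by omega)]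
        norm_num
      · by_cases hys : IsSquare y
        · have hyU : y ∉ U := by simp [hU, hys]
          have : y ^ h = 1 := (ZMod.euler_criterion p hy0).mp hys
          rw [if_neg hyU, if_neg hy0, this]
          ring
        · have hyU : y ∈ U := by simp [hU, hys]
          have : y ^ h = -1 := by
            rcases ZMod.pow_div_two_eq_neg_one_or_one p hy0 with h1' | h1'
            · exact absurd ((ZMod.euler_criterion p hy0).mpr h1') hys
            · exact h1'
          rw [if_pos hyU, if_neg hy0, this]
          ring
    rw [Finset.sum_congr rfl fun y _ => hpt y, Finset.sum_add_distrib,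
      Finset.sum_ite_mem, Finset.univ_inter, ← Finset.mul_sum,
      Finset.sum_ite_eq' Finset.univ (0 : ZMod p)]
    simp
  -- Step C : full sum of (y-1)^n is 0
  have hstepC : ∑ y : ZMod p, (y - 1) ^ n = 0 := by
    have := FiniteField.sum_pow_lt_card_sub_one (K := ZMod p) n (by rw [ZMod.card]; omega)
    calc ∑ y : ZMod p, (y - 1) ^ n = ∑ z : ZMod p, z ^ n :=
          Fintype.sum_equiv (Equiv.subRight (1 : ZMod p)) _ _ (fun y => rfl)
      _ = 0 := this
  -- Step D : the weighted sum
  have hdiv : ∀ i ≤ n, ((p - 1) ∣ (i + h) ↔ i = h) := by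
    intro i hi
    constructor
    · rintro ⟨c, hc⟩
      match c with
      | 0 => omega
      | 1 => omega
      | (c + 2) =>
        have : (p - 1) * 2 ≤ (p - 1) * (c + 2) := Nat.mul_le_mul_left _ (by omega)
        omega
    · rintro rfl
      exact ⟨1, by omega⟩
  have hstepD : ∑ y : ZMod p, (y - 1) ^ n * y ^ h
      = if h ≤ n then -((-1 : ZMod p) ^ n * ((n.choose h : ℕ) : ZMod p)) else 0 := by
    have hexp : ∀ y : ZMod p, (y - 1) ^ n * y ^ h
        = ∑ i ∈ Finset.range (n + 1), (-1 : ZMod p) ^ (i + n) * (n.choose i : ℕ) * y ^ (i + h) := by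
      intro y
      rw [sub_pow]
      rw [Finset.sum_mul]
      refine Finset.sum_congr rfl fun i _ => ?_
      rw [pow_add]
      ring
    rw [Finset.sum_congr rfl fun y _ => hexp y, Finset.sum_comm]
    have hinner : ∀ i ∈ Finset.range (n + 1),
        (∑ y : ZMod p, (-1 : ZMod p) ^ (i + n) * (n.choose i : ℕ) * y ^ (i + h))
        = if i = h then -((-1 : ZMod p) ^ n * ((n.choose h : ℕ) : ZMod p)) else 0 := by
      intro i hi
      rw [Finset.mem_range] at hi
      rw [← Finset.mul_sum, sum_pow_zmod (by omega)]
      by_cases hih : i = h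
      · rw [if_pos ((hdiv i (by omega)).mpr hih), if_pos hih, hih, pow_add,
          hhe.neg_one_pow, one_mul]
        ring
      · rw [if_neg (fun hd => hih ((hdiv i (by omega)).mp hd)), if_neg hih]
        ring
    rw [Finset.sum_congr rfl hinner, Finset.sum_ite_eq' (Finset.range (n + 1)) h
      fun _ => -((-1 : ZMod p) ^ n * ((n.choose h : ℕ) : ZMod p))]
    by_cases hhn : h ≤ n
    · rw [if_pos (Finset.mem_range.mpr (by omega)), if_pos hhn]
    · rw [if_neg (fun hmem => hhn (Nat.lt_succ_iff.mp (Finset.mem_range.mp hmem))), if_neg hhn]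
  -- assemble
  have hsplit : ∑ y : ZMod p, (y - 1) ^ n * (1 - y ^ h)
      = (∑ y : ZMod p, (y - 1) ^ n) - ∑ y : ZMod p, (y - 1) ^ n * y ^ h := by
    rw [← Finset.sum_sub_distrib]
    exact Finset.sum_congr rfl fun y _ => by ring
  rw [hsumT]
  have := hstepB.symm.trans (hsplit.trans (by rw [hstepC, hstepD]))
  split_ifs at this ⊢ with hc
  · linear_combination this
  · linear_combination this

lemma neg_one_pow_congr' {R : Type*} [Monoid R] [HasDistribNeg R] {i j : ℕ}
    (hij : i % 2 = j % 2) : (-1 : R) ^ i = (-1) ^ j := by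
  conv_lhs => rw [← Nat.div_add_mod i 2]
  conv_rhs => rw [← Nat.div_add_mod j 2]
  rw [pow_add, pow_add, pow_mul, pow_mul, neg_one_sq, one_pow, one_pow, hij]

lemma relation_sum (T : Finset (ZMod p)) (hT0 : ∀ x ∈ T, x ≠ 0)
    {a : ℕ} (ha : Nat.Coprime a (p - 1)) (hp2 : 2 < p)
    {g : ZMod p} (hg : g ≠ 0)
    (himg : T.image (fun x => x ^ a) = T.image (fun x => g * x)) (k : ℕ) :
    ∑ x ∈ T, x ^ (a * k) = g ^ k * ∑ x ∈ T, x ^ k := by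
  obtain ⟨b, -, hb⟩ := Nat.exists_mul_mod_eq_one_of_coprime ha (by omega)
  have hinj : ∀ x ∈ T, ∀ y ∈ T, x ^ a = y ^ a → x = y := by
    intro x hx y hy hxy
    have hred : ∀ z : ZMod p, z ≠ 0 → z ^ (a * b) = z := by
      intro z hz
      rw [pow_reduce hz (a * b), hb, pow_one]
    calc x = x ^ (a * b) := (hred x (hT0 x hx)).symm
      _ = (x ^ a) ^ b := by rw [pow_mul]
      _ = (y ^ a) ^ b := by rw [hxy]
      _ = y := by rw [← pow_mul, hred y (hT0 y hy)]
  have h1 : ∑ x ∈ T, (x ^ a) ^ k = ∑ x ∈ T, (g * x) ^ k := by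
    have e1 := Finset.sum_image (f := fun y : ZMod p => y ^ k) (g := fun x : ZMod p => x ^ a)
      (s := T) hinj
    have e2 := Finset.sum_image (f := fun y : ZMod p => y ^ k) (g := fun x : ZMod p => g * x)
      (s := T) (fun x (_ : x ∈ T) y _ (hxy : g * x = g * y) => mul_left_cancel₀ hg hxy)
    rw [← e1, himg, e2]
  calc ∑ x ∈ T, x ^ (a * k) = ∑ x ∈ T, (x ^ a) ^ k :=
        Finset.sum_congr rfl fun x _ => by rw [← pow_mul]
    _ = ∑ x ∈ T, (g * x) ^ k := h1
    _ = ∑ x ∈ T, g ^ k * x ^ k := Finset.sum_congr rfl fun x _ => mul_pow g x k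
    _ = g ^ k * ∑ x ∈ T, x ^ k := (Finset.mul_sum _ _ _).symm

lemma caseA_div {a h p : ℕ} (h3 : 3 ≤ a) (hah : a < h) (h2h : 2 * h = p - 1)
    (hp : 11 < p) : ∃ r0, 1 ≤ r0 ∧ r0 < h ∧ h ≤ a * r0 ∧ a * r0 ≤ p - 2 := by
  have hd := Nat.div_add_mod (p - 2) a
  have hmlt := Nat.mod_lt (p - 2) (show 0 < a by omega)
  refine ⟨(p - 2) / a, ?_, ?_, ?_, ?_⟩
  · rw [Nat.le_div_iff_mul_le (by omega)]; omega
  · have h1 : (p - 2) / a ≤ (p - 2) / 3 := Nat.div_le_div_left h3 (by norm_num)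
    omega
  · generalize hX : a * ((p - 2) / a) = X at hd ⊢
    generalize hY : (p - 2) % a = Y at hd hmlt
    omega
  · rw [mul_comm]; exact Nat.div_mul_le_self _ _

end SLCEAux

/-- For a prime `p` with `p - 1 = 4m`, `gcd(m,3) = 1`, `p > 101`,
the multiplier group of the SLCE almost difference set over `𝔽_p^*` is trivial. -/
theorem slce_multiplier_group_trivial_four_m
    (p m : ℕ) (hp : p.Prime) (hm : p - 1 = 4 * m) (hm3 : Nat.gcd m 3 = 1)
    (hbig : 101 < p)
    (S : Set (ZMod p)) (hS : S = {x : ZMod p | x ≠ 0 ∧ ¬ IsSquare (x + 1)})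
    (t : (ZMod (p - 1))ˣ)
    (ht : ∃ g : ZMod p, g ≠ 0 ∧
      (fun x : ZMod p => x ^ ((t : ZMod (p - 1)).val)) '' S = (fun s => g * s) '' S) :
    t = 1 := by
  classical
  haveI hpf : Fact p.Prime := ⟨hp⟩
  haveI : NeZero (p - 1) := ⟨by omega⟩
  haveI : Fact (1 < p - 1) := ⟨by omega⟩
  have hp2 : 2 < p := by omega
  have hp4 : p % 4 = 1 := by omega
  have hh2 : 2 * (p / 2) = p - 1 := by omega
  have hhe : Even (p / 2) := Nat.even_iff.mpr (by omega)
  obtain ⟨g, hg, himg⟩ := ht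
  set a := (t : ZMod (p - 1)).val with had
  have ha : Nat.Coprime a (p - 1) := ZMod.val_coe_unit_coprime t
  have hgcd : Nat.gcd a (p - 1) = 1 := ha
  have haub : a < p - 1 := ZMod.val_lt _
  have ha1 : 1 ≤ a := by
    rcases Nat.eq_zero_or_pos a with h0 | h0
    · exfalso; rw [h0] at hgcd; simp at hgcd; omega
    · exact h0
  have haodd : a % 2 = 1 := by
    rcases Nat.even_or_odd a with he | ho
    · exfalso
      obtain ⟨c, hc⟩ := he
      have h2 : 2 ∣ Nat.gcd a (p - 1) := Nat.dvd_gcd ⟨c, by omega⟩ ⟨2 * m, by omega⟩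
      rw [hgcd] at h2
      omega
    · exact Nat.odd_iff.mp ho
  -- the finite SLCE set
  set T : Finset (ZMod p) :=
    Finset.univ.filter (fun x : ZMod p => x ≠ 0 ∧ ¬ IsSquare (x + 1)) with hTdef
  have hT : ∀ x, x ∈ T ↔ x ≠ 0 ∧ ¬ IsSquare (x + 1) := by
    intro x; simp [hTdef]
  have hT0 : ∀ x ∈ T, x ≠ 0 := fun x hx => ((hT x).mp hx).1
  have hTS : (T : Set (ZMod p)) = S := by
    rw [hS]; ext x; simp [hTdef]
  have himgF : T.image (fun x => x ^ a) = T.image (fun x => g * x) := by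
    apply Finset.coe_injective
    rw [Finset.coe_image, Finset.coe_image, hTS]
    exact himg
  have hkey : ∀ {n : ℕ}, 1 ≤ n → n ≤ p - 2 → (2 : ZMod p) * ∑ x ∈ T, x ^ n
      = (-1) ^ n * ((if p / 2 ≤ n then ((n.choose (p / 2) : ℕ) : ZMod p) else 0) - 1) :=
    fun h1 h2 => key_sum hp4 (by omega) T hT h1 h2
  -- the master relation
  have hrel : ∀ k, 1 ≤ k → k ≤ p - 2 →
      (if p / 2 ≤ (a * k) % (p - 1)
        then ((((a * k) % (p - 1)).choose (p / 2) : ℕ) : ZMod p) else 0) - 1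
        = g ^ k * ((if p / 2 ≤ k then ((k.choose (p / 2) : ℕ) : ZMod p) else 0) - 1) := by
    intro k hk1 hk2
    have hN2 : (a * k) % (p - 1) < p - 1 := Nat.mod_lt _ (by omega)
    have hN1 : 1 ≤ (a * k) % (p - 1) := by
      rcases Nat.eq_zero_or_pos ((a * k) % (p - 1)) with h0 | h0
      · exfalso
        have hdvd : (p - 1) ∣ a * k := Nat.dvd_of_mod_eq_zero h0
        have hdk : (p - 1) ∣ k := (Nat.Coprime.dvd_of_dvd_mul_left (Nat.Coprime.symm ha) hdvd)
        have := Nat.le_of_dvd (by omega) hdk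
        omega
      · exact h0
    have hsum : ∑ x ∈ T, x ^ (a * k) = ∑ x ∈ T, x ^ ((a * k) % (p - 1)) :=
      Finset.sum_congr rfl fun x hx => pow_reduce (hT0 x hx) (a * k)
    have hR := relation_sum T hT0 ha hp2 hg himgF k
    have hKN := hkey hN1 (by omega)
    have hKk := hkey hk1 hk2
    have hparn : (a * k) % (p - 1) % 2 = k % 2 := by
      have e1 := Nat.mod_add_div (a * k) (p - 1)
      have e2 : (a * k) % 2 = k % 2 := by
        rw [Nat.mul_mod, haodd, one_mul]; omega
      obtain ⟨c, hc⟩ : 2 ∣ (p - 1) * (a * k / (p - 1)) :=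
        Dvd.dvd.mul_right ⟨2 * m, by omega⟩ _
      generalize hX : (p - 1) * (a * k / (p - 1)) = X at e1 hc
      generalize hak : a * k = ak at e1 e2
      omega
    have hpar : (-1 : ZMod p) ^ ((a * k) % (p - 1)) = (-1 : ZMod p) ^ k :=
      neg_one_pow_congr' hparn
    have hchain : (-1 : ZMod p) ^ k *
        ((if p / 2 ≤ (a * k) % (p - 1)
          then ((((a * k) % (p - 1)).choose (p / 2) : ℕ) : ZMod p) else 0) - 1)
        = (-1 : ZMod p) ^ k *
          (g ^ k * ((if p / 2 ≤ k then ((k.choose (p / 2) : ℕ) : ZMod p) else 0) - 1)) := by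
      calc (-1 : ZMod p) ^ k *
          ((if p / 2 ≤ (a * k) % (p - 1)
            then ((((a * k) % (p - 1)).choose (p / 2) : ℕ) : ZMod p) else 0) - 1)
          = (-1 : ZMod p) ^ ((a * k) % (p - 1)) *
            ((if p / 2 ≤ (a * k) % (p - 1)
              then ((((a * k) % (p - 1)).choose (p / 2) : ℕ) : ZMod p) else 0) - 1) := by
            rw [hpar]
        _ = 2 * ∑ x ∈ T, x ^ ((a * k) % (p - 1)) := hKN.symm
        _ = 2 * ∑ x ∈ T, x ^ (a * k) := by rw [hsum]
        _ = 2 * (g ^ k * ∑ x ∈ T, x ^ k) := by rw [hR]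
        _ = g ^ k * (2 * ∑ x ∈ T, x ^ k) := by ring
        _ = g ^ k * ((-1 : ZMod p) ^ k *
              ((if p / 2 ≤ k then ((k.choose (p / 2) : ℕ) : ZMod p) else 0) - 1)) := by
            rw [hKk]
        _ = (-1 : ZMod p) ^ k *
              (g ^ k * ((if p / 2 ≤ k then ((k.choose (p / 2) : ℕ) : ZMod p) else 0) - 1)) := by
            ring
    exact mul_left_cancel₀ (pow_ne_zero _ (neg_ne_zero.mpr one_ne_zero)) hchain
  -- it suffices to show a = 1
  have hfinal : a = 1 → t = 1 := by
    intro h1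
    have hval : (t : ZMod (p - 1)).val = (1 : ZMod (p - 1)).val := by
      rw [ZMod.val_one]; exact h1
    exact Units.ext (ZMod.val_injective _ hval)
  by_contra hne
  have hane : a ≠ 1 := fun h1 => hne (hfinal h1)
  have hah : a ≠ p / 2 := by
    intro heq
    have hdvd : a ∣ p - 1 := ⟨2, by omega⟩
    rw [Nat.gcd_eq_left hdvd] at hgcd
    omega
  rcases lt_trichotomy a (p / 2) with hlt | heq | hgt
  · -- Case A : a < p/2
    have ha3 : 3 ≤ a := by omega
    have hg1 : g = 1 := by
      have hr1 := hrel 1 le_rfl (by omega)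
      have hN : (a * 1) % (p - 1) = a := by rw [mul_one, Nat.mod_eq_of_lt (by omega)]
      rw [hN, if_neg (by omega), if_neg (by omega), pow_one] at hr1
      linear_combination hr1
    obtain ⟨r0, hr01, hr0h, hler, hle2⟩ := caseA_div ha3 hlt hh2 (by omega)
    have hNr : (a * r0) % (p - 1) = a * r0 := Nat.mod_eq_of_lt (by omega)
    have hr := hrel r0 hr01 (by omega)
    rw [hNr, hg1, one_pow, one_mul, if_pos hler, if_neg (by omega)] at hr
    have hzero : (((a * r0).choose (p / 2) : ℕ) : ZMod p) = 0 := by linear_combination hr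
    exact choose_cast_ne_zero (by omega) hler hzero
  · exact hah heq
  · -- Case B : p/2 < a
    have hfermat : g ^ (p - 1) = 1 := ZMod.pow_card_sub_one_eq_one hg
    have hgp : g ^ (p - 2) * g = 1 := by
      rw [← pow_succ, show p - 2 + 1 = p - 1 by omega]; exact hfermat
    -- the k = p-2 relation
    have hN1eq : (a * (p - 2)) % (p - 1) = p - 1 - a := by
      have hmodeq : a * (p - 2) ≡ p - 1 - a [MOD p - 1] := by
        rw [Nat.modEq_iff_dvd]
        have c0 : ((p - 1 : ℕ) : ℤ) = (p : ℤ) - 1 := by omega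
        have c1 : ((p - 1 - a : ℕ) : ℤ) = (p : ℤ) - 1 - a := by omega
        have c2 : ((p - 2 : ℕ) : ℤ) = (p : ℤ) - 2 := by omega
        push_cast
        rw [c1, c2]
        refine ⟨1 - (a : ℤ), ?_⟩
        rw [c0]
        ring
      have h1 : (a * (p - 2)) % (p - 1) = (p - 1 - a) % (p - 1) := hmodeq
      rw [h1, Nat.mod_eq_of_lt (by omega)]
    have hC2v : (((p - 2).choose (p / 2) : ℕ) : ZMod p) = ((p / 2 : ℕ) : ZMod p) + 1 := by
      have := row_p2 (p := p) (k := p / 2) (by omega)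
      rw [hhe.neg_one_pow, mul_one] at this
      rw [this]; push_cast; ring
    have hrP2 := hrel (p - 2) (by omega) le_rfl
    rw [hN1eq, if_neg (by omega), if_pos (by omega), hC2v] at hrP2
    -- hrP2 : 0 - 1 = g^(p-2) * ((h+1) - 1)
    have hgh : g = -((p / 2 : ℕ) : ZMod p) := by
      linear_combination (-g) * hrP2 - ((p / 2 : ℕ) : ZMod p) * hgp
    have h2h' : (2 : ZMod p) * ((p / 2 : ℕ) : ZMod p) = -1 := by
      have hc : ((2 * (p / 2) : ℕ) : ZMod p) = -1 := by
        rw [hh2]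
        have := cast_sub_eq (p := p) (i := p - 1) (j := 1) (by omega)
        simpa using this
      push_cast at hc
      exact hc
    have hg2 : (2 : ZMod p) * g = 1 := by rw [hgh]; linear_combination -h2h'
    -- subcases on n2 = 2a - (p-1)
    have hn2l : 2 ≤ 2 * a - (p - 1) := by omega
    have hn2u : 2 * a - (p - 1) ≤ p - 3 := by omega
    have hn2h : 2 * a - (p - 1) ≠ p / 2 := by
      intro heq
      have ham : a = 3 * m := by omega
      have hdm : m ∣ Nat.gcd a (p - 1) := Nat.dvd_gcd ⟨3, by omega⟩ ⟨4, by omega⟩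
      rw [hgcd] at hdm
      have hm1 : m = 1 := Nat.dvd_one.mp hdm
      omega
    have hN2eq : (a * 2) % (p - 1) = 2 * a - (p - 1) := by
      have h1 : a * 2 = (p - 1) + (2 * a - (p - 1)) := by omega
      rw [h1, Nat.add_mod_left, Nat.mod_eq_of_lt (by omega)]
    rcases lt_trichotomy (2 * a - (p - 1)) (p / 2) with hx | hx | hx
    · -- n2 < p/2
      have hr2 := hrel 2 (by omega) (by omega)
      rw [hN2eq, if_neg (by omega), if_neg (by omega)] at hr2
      have h30 : (3 : ZMod p) = 0 := by
        linear_combination (2 * g + 1) * hg2 - 4 * hr2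
      have hdvd3 : p ∣ 3 := by
        have := (ZMod.natCast_eq_zero_iff 3 p).mp (by exact_mod_cast h30)
        exact this
      have := Nat.le_of_dvd (by norm_num) hdvd3
      omega
    · exact hn2h hx
    · -- n2 > p/2 ; use k = p - 3
      have hN3eq : (a * (p - 3)) % (p - 1) = 2 * (p - 1) - 2 * a := by
        have hmodeq : a * (p - 3) ≡ 2 * (p - 1) - 2 * a [MOD p - 1] := by
          rw [Nat.modEq_iff_dvd]
          have c0 : ((p - 1 : ℕ) : ℤ) = (p : ℤ) - 1 := by omega
          have c1 : ((2 * (p - 1) - 2 * a : ℕ) : ℤ) = 2 * ((p : ℤ) - 1) - 2 * a := by omega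
          have c2 : ((p - 3 : ℕ) : ℤ) = (p : ℤ) - 3 := by omega
          push_cast
          rw [c1, c2]
          refine ⟨2 - (a : ℤ), ?_⟩
          rw [c0]
          ring
        have h1 : (a * (p - 3)) % (p - 1) = (2 * (p - 1) - 2 * a) % (p - 1) := hmodeq
        rw [h1, Nat.mod_eq_of_lt (by omega)]
      have hC3v := row_p3 (p := p) (k := p / 2) (by omega) (by omega)
      rw [hhe.neg_one_pow, mul_one] at hC3v
      push_cast at hC3v
      -- hC3v : C * 2 = (h+1) * (h+2)
      have hgp3 : g ^ (p - 3) * g ^ 2 = 1 := by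
        rw [← pow_add, show p - 3 + 2 = p - 1 by omega]; exact hfermat
      have hr3 := hrel (p - 3) (by omega) (by omega)
      rw [hN3eq, if_neg (by omega), if_pos (by omega)] at hr3
      set C := (((p - 3).choose (p / 2) : ℕ) : ZMod p) with hCdef
      set Hc := ((p / 2 : ℕ) : ZMod p) with hHcdef
      have k1 : -g ^ 2 = C - 1 := by
        linear_combination g ^ 2 * hr3 + (C - 1) * hgp3
      have k2 : (4 : ZMod p) * C = 3 := by
        linear_combination (-4) * k1 - (2 * g + 1) * hg2
      have k3 : (8 : ZMod p) * C = 3 := by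
        linear_combination 4 * hC3v + (2 * Hc + 5) * h2h'
      have h30 : (3 : ZMod p) = 0 := by linear_combination k3 - 2 * k2
      have hdvd3 : p ∣ 3 := by
        have := (ZMod.natCast_eq_zero_iff 3 p).mp (by exact_mod_cast h30)
        exact this
      have := Nat.le_of_dvd (by norm_num) hdvd3
      omega
end
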